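/- arXiv:1712.09976 — 7 statements merged into one kernel-verified Lean document; each statement's English description precedes it below -/
import Mathlib

section
/- Let p be a prime, let d ≥ 1 be an integer, let n_1, …, n_d ∈ ℤ be integers of arbitrary sign, and let c_1, …, c_d ∈ ℚ_p satisfy ‖c_i‖_p = 1 for all i. Then for every z ∈ ℚ_p with ‖z‖_p < 1, the family indexed by tuples of integers (m_1, …, m_d) with 0 < m_1 < m_2 < ⋯ < m_d, whose term at (m_1, …, m_d) is (∏_{i=1}^d c_i^{m_i}) · z^{m_d} · ∏_{i=1}^d m_i^{−n_i}, is summable in ℚ_p. -/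
open Filter Set

private lemma padic_nat_norm_inv_le {p : ℕ} [Fact p.Prime] {a : ℕ} (ha : 1 ≤ a) :
    (a : ℝ)⁻¹ ≤ ‖(a : ℚ_[p])‖ := by
  have hx : (a : ℚ_[p]) ≠ 0 := Nat.cast_ne_zero.mpr (by omega)
  rw [Padic.norm_eq_zpow_neg_valuation hx, Padic.valuation_natCast]
  have hdvd : p ^ padicValNat p a ∣ a := pow_padicValNat_dvd
  have hle : (p : ℝ) ^ padicValNat p a ≤ (a : ℝ) := by
    exact_mod_cast Nat.cast_le.mpr (Nat.le_of_dvd (by omega) hdvd)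
  have hppos : (0:ℝ) < (p:ℝ) ^ padicValNat p a :=
    pow_pos (by exact_mod_cast (Fact.out : p.Prime).pos) _
  rw [zpow_neg, zpow_natCast]
  exact inv_anti₀ hppos hle

private lemma padic_zpow_norm_le {p : ℕ} [Fact p.Prime] {a k : ℕ} (ha : 1 ≤ a) (hak : a ≤ k)
    (ni : ℤ) : ‖(a : ℚ_[p])‖ ^ (-ni) ≤ (k : ℝ) ^ ni.natAbs := by
  have hk1 : (1:ℝ) ≤ (k:ℝ) := by exact_mod_cast le_trans ha hak
  have hpos : (0:ℝ) < ‖(a : ℚ_[p])‖ := by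
    have : (0:ℝ) < (a:ℝ)⁻¹ := by positivity
    linarith [padic_nat_norm_inv_le (p := p) ha]
  have hle1 : ‖(a : ℚ_[p])‖ ≤ 1 := by
    simpa using Padic.norm_int_le_one (p := p) (a : ℤ)
  have hinv : ‖(a : ℚ_[p])‖⁻¹ ≤ (a : ℝ) := by
    rw [inv_le_comm₀ hpos (by positivity)]
    exact padic_nat_norm_inv_le ha
  rcases ni with s | s
  · -- ni = s ≥ 0, exponent -s
    rw [Int.ofNat_eq_coe, Int.natAbs_natCast, zpow_neg, zpow_natCast, ← inv_pow]
    exact pow_le_pow_left₀ (by positivity) (hinv.trans (by exact_mod_cast hak)) s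
  · -- ni = -(s+1), exponent s+1
    rw [Int.natAbs_negSucc, show (-(Int.negSucc s)) = ((s+1 : ℕ) : ℤ) by simp [Int.negSucc_eq], zpow_natCast]
    exact le_trans (pow_le_one₀ hpos.le hle1) (one_le_pow₀ hk1)

/-- p-adic convergence of localized multiple polylogarithm series in ℚ_p. -/
theorem localized_MPL_summable_padic (p : ℕ) [Fact p.Prime] (d : ℕ) (hd : 1 ≤ d)
    (n : Fin d → ℤ) (c : Fin d → ℚ_[p]) (hc : ∀ i, ‖c i‖ = 1)
    (z : ℚ_[p]) (hz : ‖z‖ < 1) :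
    Summable (fun m : {f : Fin d → ℕ // StrictMono f ∧ ∀ i, 0 < f i} =>
      (∏ i, c i ^ (m.1 i)) * z ^ (m.1 ⟨d - 1, by omega⟩) *
        ∏ i, ((m.1 i : ℚ_[p])) ^ (-(n i))) := by
  set S := {f : Fin d → ℕ // StrictMono f ∧ ∀ i, 0 < f i}
  set last : Fin d := ⟨d - 1, by omega⟩
  set N := ∑ i, (n i).natAbs with hN
  apply NonarchimedeanAddGroup.summable_of_tendsto_cofinite_zero
  rw [NormedAddCommGroup.tendsto_nhds_zero]
  intro ε hε
  have hG : Tendsto (fun k : ℕ => (k : ℝ) ^ N * ‖z‖ ^ k) atTop (nhds 0) :=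
    tendsto_pow_const_mul_const_pow_of_lt_one N (norm_nonneg z) hz
  obtain ⟨M, hM⟩ := (hG.eventually (gt_mem_nhds hε)).exists_forall_of_atTop
  rw [Filter.eventually_cofinite]
  have hsub : {m : S | ¬ ‖(∏ i, c i ^ (m.1 i)) * z ^ (m.1 last) *
      ∏ i, ((m.1 i : ℚ_[p])) ^ (-(n i))‖ < ε} ⊆ {m : S | m.1 last < M} := by
    intro m hm
    by_contra hlt
    apply hm
    simp only [Set.mem_setOf_eq, not_lt] at hlt
    have hmono := m.2.1.monotone
    have hbound : ∀ i : Fin d, m.1 i ≤ m.1 last := by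
      intro i
      exact hmono (by simp only [Fin.le_def, last, Fin.val_mk]; omega)
    have h1 : ‖∏ i, c i ^ (m.1 i)‖ = 1 := by
      rw [norm_prod]
      simp [norm_pow, hc]
    have h3 : ‖∏ i, ((m.1 i : ℚ_[p])) ^ (-(n i))‖ ≤ (m.1 last : ℝ) ^ N := by
      rw [norm_prod, hN, ← Finset.prod_pow_eq_pow_sum]
      apply Finset.prod_le_prod (fun i _ => norm_nonneg _)
      intro i _
      rw [norm_zpow]
      exact padic_zpow_norm_le (m.2.2 i) (hbound i) (n i)
    calc ‖(∏ i, c i ^ (m.1 i)) * z ^ (m.1 last) * ∏ i, ((m.1 i : ℚ_[p])) ^ (-(n i))‖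
        = ‖z‖ ^ (m.1 last) * ‖∏ i, ((m.1 i : ℚ_[p])) ^ (-(n i))‖ := by
          rw [norm_mul, norm_mul, h1, one_mul, norm_pow]
      _ ≤ ‖z‖ ^ (m.1 last) * (m.1 last : ℝ) ^ N := by
          apply mul_le_mul_of_nonneg_left h3 (by positivity)
      _ = (m.1 last : ℝ) ^ N * ‖z‖ ^ (m.1 last) := by ring
      _ < ε := hM _ hlt
  apply Set.Finite.subset _ hsub
  have hfin : (Set.pi Set.univ (fun _ : Fin d => Set.Iio M)).Finite :=
    Set.Finite.pi (fun _ => Set.finite_Iio M)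
  apply Set.Finite.of_finite_image (f := Subtype.val) _ Subtype.val_injective.injOn
  apply hfin.subset
  rintro f ⟨m, hm, rfl⟩
  intro i _
  exact lt_of_le_of_lt (m.2.1.monotone (by simp only [Fin.le_def, last, Fin.val_mk]; omega)) hm
end

section
/- Let d, d', m be natural numbers. For k ∈ ℕ, call a 'chain of length k below m' a strictly increasing function e : Fin k → ℕ with 0 < e(i) < m for all i. Consider the set of quadruples (r, φ, ψ, e) where r ∈ ℕ, φ : Fin d → Fin r and ψ : Fin d' → Fin r are strictly monotone maps whose ranges jointly cover Fin r (range φ ∪ range ψ = Fin r), and e is a chain of length r below m. Then the map (r, φ, ψ, e) ↦ (e ∘ φ, e ∘ ψ) is a bijection from this set onto the product of the set of chains of length d below m and the set of chains of length d' below m. -/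
/-- `e : Fin k → ℕ` is a chain of length `k` below `m` :
strictly increasing with `0 < e i < m` for all `i`. -/
def IsChainBelow (m : ℕ) {k : ℕ} (e : Fin k → ℕ) : Prop :=
  StrictMono e ∧ ∀ i, 0 < e i ∧ e i < m

/-- The type of chains of length `k` below `m`. -/
def ChainBelow (m k : ℕ) := {e : Fin k → ℕ // IsChainBelow m e}

/-- Quadruples `(r, φ, ψ, e)` where `φ : Fin d → Fin r` and `ψ : Fin d' → Fin r` are
strictly monotone and jointly surjective, and `e` is a chain of length `r` below `m`. -/
def QuadSet (d d' m : ℕ) :=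
  Σ r : ℕ, {q : (Fin d → Fin r) × (Fin d' → Fin r) × (Fin r → ℕ) //
    StrictMono q.1 ∧ StrictMono q.2.1 ∧
      Set.range q.1 ∪ Set.range q.2.1 = Set.univ ∧ IsChainBelow m q.2.2}

/-- The map `(r, φ, ψ, e) ↦ (e ∘ φ, e ∘ ψ)`. -/
def quadToChains (d d' m : ℕ) : QuadSet d d' m → ChainBelow m d × ChainBelow m d'
  | ⟨_, ⟨(φ, ψ, e), hφ, hψ, _, he⟩⟩ =>
    (⟨e ∘ φ, he.1.comp hφ, fun i => he.2 (φ i)⟩,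
     ⟨e ∘ ψ, he.1.comp hψ, fun j => he.2 (ψ j)⟩)

lemma range_eq_of_quad {d d' r : ℕ} {φ : Fin d → Fin r} {ψ : Fin d' → Fin r}
    (e : Fin r → ℕ) (hcov : Set.range φ ∪ Set.range ψ = Set.univ) :
    Set.range (e ∘ φ) ∪ Set.range (e ∘ ψ) = Set.range e := by
  rw [Set.range_comp, Set.range_comp, ← Set.image_union, hcov, Set.image_univ]

lemma ncard_range_strictMono {r : ℕ} {e : Fin r → ℕ} (he : StrictMono e) :
    (Set.range e).ncard = r := by
  rw [← Set.image_univ, Set.ncard_image_of_injective _ he.injective, Set.ncard_univ,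
    Nat.card_eq_fintype_card, Fintype.card_fin]

/-- the quasi-shuffle decomposition of a product of two chain sets. -/
theorem quadToChains_bijective (d d' m : ℕ) :
    Function.Bijective (quadToChains d d' m) := by
  constructor
  · rintro ⟨r, ⟨⟨φ, ψ, e⟩, hφ, hψ, hcov, he⟩⟩ ⟨r', ⟨⟨φ', ψ', e'⟩, hφ', hψ', hcov', he'⟩⟩ h
    simp only [quadToChains, Prod.mk.injEq] at h
    have h1 : e ∘ φ = e' ∘ φ' := congrArg Subtype.val (Prod.mk.inj h).1
    have h2 : e ∘ ψ = e' ∘ ψ' := congrArg Subtype.val (Prod.mk.inj h).2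
    have hrange : Set.range e = Set.range e' := by
      rw [← range_eq_of_quad e hcov, ← range_eq_of_quad e' hcov', h1, h2]
    have hr : r = r' := by
      have := congrArg Set.ncard hrange
      rwa [ncard_range_strictMono he.1, ncard_range_strictMono he'.1] at this
    subst hr
    have : WellFoundedLT (Fin r) := Finite.to_wellFoundedLT
    have hee : e = e' := (StrictMono.range_inj (β := Fin r) (γ := ℕ) he.1 he'.1).1 hrange
    subst hee
    have hφφ : φ = φ' := funext fun i => he.1.injective (congrFun h1 i)
    have hψψ : ψ = ψ' := funext fun i => he.1.injective (congrFun h2 i)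
    subst hφφ; subst hψψ
    rfl
  · rintro ⟨⟨a, ha⟩, ⟨b, hb⟩⟩
    classical
    set S : Finset ℕ := Finset.univ.image a ∪ Finset.univ.image b with hS
    set r : ℕ := S.card with hr
    set E : Fin r ≃o {x // x ∈ S} := S.orderIsoOfFin rfl with hE
    have hmema : ∀ i, a i ∈ S := fun i => by
      simp [hS, Finset.mem_union, Finset.mem_image]
    have hmemb : ∀ i, b i ∈ S := fun i => by
      simp [hS, Finset.mem_union, Finset.mem_image]
    set e : Fin r → ℕ := fun j => (E j : ℕ) with he
    set φ : Fin d → Fin r := fun i => E.symm ⟨a i, hmema i⟩ with hφ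
    set ψ : Fin d' → Fin r := fun i => E.symm ⟨b i, hmemb i⟩ with hψ
    have hemono : StrictMono e := fun i j hij => by
      exact_mod_cast E.strictMono hij
    have hφmono : StrictMono φ := fun i j hij =>
      E.symm.strictMono (show (⟨a i, hmema i⟩ : {x // x ∈ S}) < ⟨a j, hmema j⟩ from
        ha.1 hij)
    have hψmono : StrictMono ψ := fun i j hij =>
      E.symm.strictMono (show (⟨b i, hmemb i⟩ : {x // x ∈ S}) < ⟨b j, hmemb j⟩ from
        hb.1 hij)
    have hmem : ∀ j : Fin r, (∃ i, a i = (E j : ℕ)) ∨ ∃ i, b i = (E j : ℕ) := by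
      intro j
      have hj : (E j : ℕ) ∈ S := (E j).2
      rcases Finset.mem_union.mp hj with hj' | hj'
      · obtain ⟨i, -, hi⟩ := Finset.mem_image.mp hj'
        exact Or.inl ⟨i, hi⟩
      · obtain ⟨i, -, hi⟩ := Finset.mem_image.mp hj'
        exact Or.inr ⟨i, hi⟩
    have hcov : Set.range φ ∪ Set.range ψ = Set.univ := by
      ext j
      simp only [Set.mem_union, Set.mem_range, Set.mem_univ, iff_true]
      rcases hmem j with ⟨i, hi⟩ | ⟨i, hi⟩
      · refine Or.inl ⟨i, ?_⟩
        show E.symm ⟨a i, hmema i⟩ = j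
        rw [show (⟨a i, hmema i⟩ : {x // x ∈ S}) = E j from Subtype.ext hi]
        exact E.symm_apply_apply j
      · refine Or.inr ⟨i, ?_⟩
        show E.symm ⟨b i, hmemb i⟩ = j
        rw [show (⟨b i, hmemb i⟩ : {x // x ∈ S}) = E j from Subtype.ext hi]
        exact E.symm_apply_apply j
    have hchain : IsChainBelow m e := by
      refine ⟨hemono, fun j => ?_⟩
      rcases hmem j with ⟨i, hi⟩ | ⟨i, hi⟩
      · show 0 < (E j : ℕ) ∧ (E j : ℕ) < m
        rw [← hi]; exact ha.2 i
      · show 0 < (E j : ℕ) ∧ (E j : ℕ) < m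
        rw [← hi]; exact hb.2 i
    refine ⟨⟨r, ⟨⟨φ, ψ, e⟩, hφmono, hψmono, hcov, hchain⟩⟩, ?_⟩
    have hea : e ∘ φ = a := funext fun i => by
      show (E (E.symm ⟨a i, hmema i⟩) : ℕ) = a i
      rw [E.apply_symm_apply]
    have heb : e ∘ ψ = b := funext fun i => by
      show (E (E.symm ⟨b i, hmemb i⟩) : ℕ) = b i
      rw [E.apply_symm_apply]
    simp only [quadToChains, Prod.mk.injEq]
    exact Prod.ext (Subtype.ext hea) (Subtype.ext heb)
end

section
/- Let R be a commutative ring, let d, d', m be natural numbers, and let A : Fin d → ℕ → R and B : Fin d' → ℕ → R be arbitrary functions. For k ∈ ℕ, call a 'chain of length k below m' a strictly increasing function e : Fin k → ℕ with 0 < e(i) < m for all i. Then (Σ_{c chain of length d below m} ∏_{i} A(i)(c(i))) · (Σ_{c' chain of length d' below m} ∏_{j} B(j)(c'(j))) = Σ_{r=0}^{d+d'} Σ_{(φ,ψ)} Σ_{e chain of length r below m} ∏_{k : Fin r} ((∏_{i ∈ φ^{-1}(k)} A(i)(e(k))) · (∏_{j ∈ ψ^{-1}(k)} B(j)(e(k)))),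 where the middle sum is over pairs of strictly monotone maps φ : Fin d → Fin r and ψ : Fin d' → Fin r with range φ ∪ range ψ = Fin r. -/
open Classical in
/-- The finite set of chains of length `k` below `m` :
strictly increasing tuples `0 < e 0 < e 1 < ⋯ < e (k-1) < m`,
encoded as strictly monotone functions `Fin k → Fin m` with positive values. -/
noncomputable def chainsBelow (m k : ℕ) : Finset (Fin k → Fin m) :=
  Finset.univ.filter fun e => StrictMono e ∧ ∀ i, 0 < (e i : ℕ)

open Classical in
/-- the localized quasi-shuffle relation in coordinate form. -/
theorem localized_quasi_shuffle (R : Type*) [CommRing R] (d d' m : ℕ)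
    (A : Fin d → ℕ → R) (B : Fin d' → ℕ → R) :
    (∑ c ∈ chainsBelow m d, ∏ i, A i ((c i : ℕ))) *
      (∑ c' ∈ chainsBelow m d', ∏ j, B j ((c' j : ℕ))) =
    ∑ r ∈ Finset.range (d + d' + 1),
      ∑ fg ∈ Finset.univ.filter
          (fun fg : (Fin d → Fin r) × (Fin d' → Fin r) =>
            StrictMono fg.1 ∧ StrictMono fg.2 ∧
              Set.range fg.1 ∪ Set.range fg.2 = Set.univ),
        ∑ e ∈ chainsBelow m r,
          ∏ k : Fin r,
            ((∏ i ∈ Finset.univ.filter (fun i => fg.1 i = k), A i ((e k : ℕ))) *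
             (∏ j ∈ Finset.univ.filter (fun j => fg.2 j = k), B j ((e k : ℕ)))) := by
  classical
  rw [Finset.sum_mul_sum, ← Finset.sum_product']
  simp only [← Finset.sum_product']
  trans ∑ x ∈ (Finset.range (d + d' + 1)).sigma
      (fun r => (Finset.univ.filter
          (fun fg : (Fin d → Fin r) × (Fin d' → Fin r) =>
            StrictMono fg.1 ∧ StrictMono fg.2 ∧
              Set.range fg.1 ∪ Set.range fg.2 = Set.univ)) ×ˢ chainsBelow m r),
      ∏ k : Fin x.1,
        ((∏ i ∈ Finset.univ.filter (fun i => x.2.1.1 i = k), A i ((x.2.2 k : ℕ))) *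
         (∏ j ∈ Finset.univ.filter (fun j => x.2.1.2 j = k), B j ((x.2.2 k : ℕ))))
  swap
  · rw [Finset.sum_sigma]
  refine (Finset.sum_bij (fun x _ => (x.2.2 ∘ x.2.1.1, x.2.2 ∘ x.2.1.2)) ?_ ?_ ?_ ?_).symm
  · rintro ⟨r, ⟨φ, ψ⟩, e⟩ hx
    simp only [Finset.mem_sigma, Finset.mem_product, Finset.mem_filter, Finset.mem_univ,
      true_and, chainsBelow, Finset.mem_range] at hx ⊢
    obtain ⟨-, ⟨hφ, hψ, -⟩, he, hpos⟩ := hx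
    exact ⟨⟨he.comp hφ, fun i => hpos _⟩, he.comp hψ, fun j => hpos _⟩
  · rintro ⟨r₁, ⟨φ₁, ψ₁⟩, e₁⟩ hx₁ ⟨r₂, ⟨φ₂, ψ₂⟩, e₂⟩ hx₂ h
    simp only [Finset.mem_sigma, Finset.mem_product, Finset.mem_filter, Finset.mem_univ,
      true_and, chainsBelow, Finset.mem_range] at hx₁ hx₂
    obtain ⟨-, ⟨hφ₁, hψ₁, hcov₁⟩, he₁, -⟩ := hx₁
    obtain ⟨-, ⟨hφ₂, hψ₂, hcov₂⟩, he₂, -⟩ := hx₂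
    have h1 : e₁ ∘ φ₁ = e₂ ∘ φ₂ := congrArg Prod.fst h
    have h2 : e₁ ∘ ψ₁ = e₂ ∘ ψ₂ := congrArg Prod.snd h
    have himg : Finset.image e₁ Finset.univ = Finset.image e₂ Finset.univ := by
      apply Finset.Subset.antisymm
      · intro v hv
        simp only [Finset.mem_image, Finset.mem_univ, true_and] at hv ⊢
        obtain ⟨k, rfl⟩ := hv
        have : k ∈ Set.range φ₁ ∪ Set.range ψ₁ := by rw [hcov₁]; trivial
        rcases this with ⟨i, rfl⟩ | ⟨j, rfl⟩
        · exact ⟨φ₂ i, (congrFun h1 i).symm⟩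
        · exact ⟨ψ₂ j, (congrFun h2 j).symm⟩
      · intro v hv
        simp only [Finset.mem_image, Finset.mem_univ, true_and] at hv ⊢
        obtain ⟨k, rfl⟩ := hv
        have : k ∈ Set.range φ₂ ∪ Set.range ψ₂ := by rw [hcov₂]; trivial
        rcases this with ⟨i, rfl⟩ | ⟨j, rfl⟩
        · exact ⟨φ₁ i, congrFun h1 i⟩
        · exact ⟨ψ₁ j, congrFun h2 j⟩
    have hr : r₁ = r₂ := by
      have c1 : (Finset.image e₁ Finset.univ).card = r₁ := by
        rw [Finset.card_image_of_injective _ he₁.injective, Finset.card_univ, Fintype.card_fin]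
      have c2 : (Finset.image e₂ Finset.univ).card = r₂ := by
        rw [Finset.card_image_of_injective _ he₂.injective, Finset.card_univ, Fintype.card_fin]
      rw [← c1, ← c2, himg]
    subst hr
    have hc1 : (Finset.image e₁ Finset.univ).card = r₁ := by
      rw [Finset.card_image_of_injective _ he₁.injective, Finset.card_univ, Fintype.card_fin]
    have he : e₁ = e₂ :=
      (Finset.orderEmbOfFin_unique hc1
          (fun k => Finset.mem_image_of_mem _ (Finset.mem_univ k)) he₁).trans
        (Finset.orderEmbOfFin_unique hc1 (fun k => by
          rw [himg]; exact Finset.mem_image_of_mem _ (Finset.mem_univ k)) he₂).symm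
    subst he
    have hφ : φ₁ = φ₂ := funext fun i => he₁.injective (congrFun h1 i)
    have hψ : ψ₁ = ψ₂ := funext fun j => he₁.injective (congrFun h2 j)
    simp [hφ, hψ]
  · rintro ⟨c, c'⟩ hp
    simp only [Finset.mem_product, chainsBelow, Finset.mem_filter, Finset.mem_univ,
      true_and] at hp
    obtain ⟨⟨hc, hcpos⟩, hc', hc'pos⟩ := hp
    set s : Finset (Fin m) := Finset.image c Finset.univ ∪ Finset.image c' Finset.univ with hs
    have hmemc : ∀ i, c i ∈ s := fun i =>
      Finset.mem_union_left _ (Finset.mem_image_of_mem _ (Finset.mem_univ i))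
    have hmemc' : ∀ j, c' j ∈ s := fun j =>
      Finset.mem_union_right _ (Finset.mem_image_of_mem _ (Finset.mem_univ j))
    set r : ℕ := s.card with hrdef
    have hrc : s.card = r := rfl
    set iso := s.orderIsoOfFin hrc with hiso
    set e : Fin r → Fin m := fun k => (iso k : Fin m) with hedef
    have hee : ∀ k, e k = s.orderEmbOfFin hrc k := fun k => rfl
    have hemem : ∀ k, e k ∈ s := fun k => (iso k).2
    have hemono : StrictMono e := by
      intro a b hab
      exact Subtype.mk_lt_mk.mp (iso.strictMono hab)
    set φ : Fin d → Fin r := fun i => iso.symm ⟨c i, hmemc i⟩ with hφdef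
    set ψ : Fin d' → Fin r := fun j => iso.symm ⟨c' j, hmemc' j⟩ with hψdef
    have heφ : ∀ i, e (φ i) = c i := by
      intro i
      show ((iso (iso.symm ⟨c i, hmemc i⟩)) : Fin m) = c i
      rw [iso.apply_symm_apply]
    have heψ : ∀ j, e (ψ j) = c' j := by
      intro j
      show ((iso (iso.symm ⟨c' j, hmemc' j⟩)) : Fin m) = c' j
      rw [iso.apply_symm_apply]
    have hφmono : StrictMono φ := by
      intro a b hab
      exact iso.symm.strictMono (Subtype.mk_lt_mk.mpr (hc hab))
    have hψmono : StrictMono ψ := by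
      intro a b hab
      exact iso.symm.strictMono (Subtype.mk_lt_mk.mpr (hc' hab))
    have hcov : Set.range φ ∪ Set.range ψ = Set.univ := by
      apply Set.eq_univ_of_forall
      intro k
      have : (iso k : Fin m) ∈ s := (iso k).2
      rcases Finset.mem_union.mp this with hmem | hmem
      · obtain ⟨i, -, hi⟩ := Finset.mem_image.mp hmem
        left
        refine ⟨i, ?_⟩
        have hsub : (⟨c i, hmemc i⟩ : {x // x ∈ s}) = iso k := Subtype.ext hi
        calc φ i = iso.symm ⟨c i, hmemc i⟩ := rfl
          _ = iso.symm (iso k) := by rw [hsub]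
          _ = k := iso.symm_apply_apply k
      · obtain ⟨j, -, hj⟩ := Finset.mem_image.mp hmem
        right
        refine ⟨j, ?_⟩
        have hsub : (⟨c' j, hmemc' j⟩ : {x // x ∈ s}) = iso k := Subtype.ext hj
        calc ψ j = iso.symm ⟨c' j, hmemc' j⟩ := rfl
          _ = iso.symm (iso k) := by rw [hsub]
          _ = k := iso.symm_apply_apply k
    refine ⟨⟨r, ⟨φ, ψ⟩, e⟩, ?_, ?_⟩
    · simp only [Finset.mem_sigma, Finset.mem_product, Finset.mem_filter, Finset.mem_univ,
        true_and, chainsBelow, Finset.mem_range]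
      refine ⟨?_, ⟨hφmono, hψmono, hcov⟩, hemono, fun k => ?_⟩
      · have : r ≤ d + d' := by
          calc r = s.card := rfl
            _ ≤ (Finset.image c Finset.univ).card + (Finset.image c' Finset.univ).card :=
                Finset.card_union_le _ _
            _ ≤ d + d' := by
                gcongr <;> exact (Finset.card_image_le).trans (by simp)
        omega
      · have : e k ∈ s := hemem k
        rcases Finset.mem_union.mp this with hmem | hmem
        · obtain ⟨i, -, hi⟩ := Finset.mem_image.mp hmem
          rw [← hi]; exact hcpos i
        · obtain ⟨j, -, hj⟩ := Finset.mem_image.mp hmem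
          rw [← hj]; exact hc'pos j
    · exact Prod.ext (funext fun i => heφ i) (funext fun j => heψ j)
  · rintro ⟨r, ⟨φ, ψ⟩, e⟩ hx
    simp only [Function.comp_apply]
    rw [Finset.prod_mul_distrib]
    congr 1
    · rw [← Finset.prod_fiberwise Finset.univ φ (fun i => A i ((e (φ i) : ℕ)))]
      exact Finset.prod_congr rfl fun k _ => Finset.prod_congr rfl fun i hi => by
        rw [(Finset.mem_filter.mp hi).2]
    · rw [← Finset.prod_fiberwise Finset.univ ψ (fun j => B j ((e (ψ j) : ℕ)))]
      exact Finset.prod_congr rfl fun k _ => Finset.prod_congr rfl fun j hj => by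
        rw [(Finset.mem_filter.mp hj).2]
end

section
/- Let d ≥ 1 and let l_1, …, l_d be natural numbers. There exists a unique polynomial P ∈ ℚ[X, Y] of total degree at most l_1 + ⋯ + l_d + d such that for all natural numbers m < m': Σ_{m < m_1 < m_2 < ⋯ < m_d < m'} m_1^{l_1} · m_2^{l_2} ⋯ m_d^{l_d} = P(m, m'). -/
open Classical in
/-- The finite set of chains `m < m₁ < m₂ < ⋯ < m_d < m'`, encoded as strictly
monotone functions `Fin d → Fin m'` with all values `> m`. -/
noncomputable def midChains (m m' d : ℕ) : Finset (Fin d → Fin m') :=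
  Finset.univ.filter fun e => StrictMono e ∧ ∀ i, m < (e i : ℕ)

section Aux

open MvPolynomial Finset

/-- Faulhaber polynomial in variable `X 0`. -/
noncomputable def faul (p : ℕ) : MvPolynomial (Fin 2) ℚ :=
  ∑ i ∈ Finset.range (p+1),
    MvPolynomial.C (bernoulli i * ((p+1).choose i) / (p+1)) * (MvPolynomial.X 0)^(p+1-i)

lemma faul_totalDegree (p : ℕ) : (faul p).totalDegree ≤ p + 1 := by
  refine (totalDegree_finset_sum _ _).trans (Finset.sup_le fun i _ => ?_)
  refine (totalDegree_mul _ _).trans ?_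
  simp only [totalDegree_C, zero_add]
  calc (MvPolynomial.X (0:Fin 2) ^ (p+1-i)).totalDegree ≤ (p+1-i) * (MvPolynomial.X (0:Fin 2)).totalDegree := totalDegree_pow _ _
    _ ≤ p + 1 := by rw [totalDegree_X]; omega

lemma faul_eval (p n : ℕ) (y : ℚ) :
    MvPolynomial.eval ![(n : ℚ), y] (faul p) = ∑ k ∈ Finset.range n, (k : ℚ) ^ p := by
  rw [sum_range_pow]
  simp [faul]
  apply Finset.sum_congr rfl
  intro i _
  ring

lemma finsupp_sum_fin2 (s : Fin 2 →₀ ℕ) : (s.sum fun _ e => e) = s 0 + s 1 := by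
  rw [Finsupp.sum_fintype _ _ (fun _ => rfl), Fin.sum_univ_two]

/-- Indefinite-sum operator in the first variable. -/
noncomputable def sumOp (P : MvPolynomial (Fin 2) ℚ) : MvPolynomial (Fin 2) ℚ :=
  ∑ s ∈ P.support, MvPolynomial.C (P.coeff s) * faul (s 0) * (MvPolynomial.X 1)^(s 1)

lemma sumOp_totalDegree (P : MvPolynomial (Fin 2) ℚ) :
    (sumOp P).totalDegree ≤ P.totalDegree + 1 := by
  refine (totalDegree_finset_sum _ _).trans (Finset.sup_le fun s hs => ?_)
  have h1 : s 0 + s 1 ≤ P.totalDegree := by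
    rw [← finsupp_sum_fin2]; exact le_totalDegree hs
  calc (MvPolynomial.C (P.coeff s) * faul (s 0) * (MvPolynomial.X 1)^(s 1)).totalDegree
      ≤ (MvPolynomial.C (P.coeff s) * faul (s 0)).totalDegree
          + ((MvPolynomial.X (1:Fin 2) : MvPolynomial (Fin 2) ℚ)^(s 1)).totalDegree :=
        totalDegree_mul _ _
    _ ≤ ((MvPolynomial.C (P.coeff s)).totalDegree + (faul (s 0)).totalDegree)
          + (s 1) * (MvPolynomial.X (1:Fin 2) : MvPolynomial (Fin 2) ℚ).totalDegree := by
        gcongr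
        · exact totalDegree_mul _ _
        · exact totalDegree_pow _ _
    _ ≤ (0 + (s 0 + 1)) + s 1 * 1 := by
        gcongr
        · simp [totalDegree_C]
        · exact faul_totalDegree _
        · simp [totalDegree_X]
    _ ≤ P.totalDegree + 1 := by omega

lemma sumOp_eval (P : MvPolynomial (Fin 2) ℚ) (n : ℕ) (y : ℚ) :
    MvPolynomial.eval ![(n : ℚ), y] (sumOp P)
      = ∑ k ∈ Finset.range n, MvPolynomial.eval ![(k : ℚ), y] P := by
  have hP : ∀ k : ℕ, MvPolynomial.eval ![(k : ℚ), y] P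
      = ∑ s ∈ P.support, P.coeff s * ((k:ℚ) ^ (s 0) * y ^ (s 1)) := by
    intro k
    rw [eval_eq']
    refine Finset.sum_congr rfl fun s _ => ?_
    rw [Fin.prod_univ_two]
    simp
  simp only [hP]
  rw [Finset.sum_comm]
  unfold sumOp
  rw [map_sum]
  refine Finset.sum_congr rfl fun s _ => ?_
  simp only [map_mul, map_pow, eval_C, eval_X, faul_eval]
  rw [Finset.mul_sum, Finset.sum_mul]
  refine Finset.sum_congr rfl fun k _ => ?_
  simp [Matrix.cons_val_one]
  ring

lemma aeval_totalDegree_le (f : Fin 2 → MvPolynomial (Fin 2) ℚ)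
    (hf : ∀ i, (f i).totalDegree ≤ 1) (P : MvPolynomial (Fin 2) ℚ) :
    (MvPolynomial.aeval f P).totalDegree ≤ P.totalDegree := by
  conv_lhs => rw [P.as_sum, map_sum]
  refine (totalDegree_finset_sum _ _).trans (Finset.sup_le fun s hs => ?_)
  rw [aeval_monomial]
  refine (totalDegree_mul _ _).trans ?_
  have h0 : (algebraMap ℚ (MvPolynomial (Fin 2) ℚ) (P.coeff s)).totalDegree = 0 := by
    rw [MvPolynomial.algebraMap_eq]; exact totalDegree_C _
  rw [h0, zero_add]
  refine (totalDegree_finset_prod _ _).trans ?_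
  calc ∑ i ∈ s.support, ((f i) ^ (s i)).totalDegree
      ≤ ∑ i ∈ s.support, s i * 1 := by
        refine Finset.sum_le_sum fun i _ => ?_
        exact (totalDegree_pow _ _).trans (by gcongr; exact hf i)
    _ = s.sum fun _ e => e := by simp [Finsupp.sum]
    _ ≤ P.totalDegree := le_totalDegree hs


lemma strictMono_cons {d m' : ℕ} (a : Fin m') (e : Fin d → Fin m')
    (he : StrictMono e) (ha : ∀ i, a < e i) : StrictMono (Fin.cons a e) := by
  intro i j hij
  induction j using Fin.cases with
  | zero => exact absurd hij (Fin.not_lt_zero i)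
  | succ j' =>
    induction i using Fin.cases with
    | zero => simpa using ha j'
    | succ i' =>
      simp only [Fin.cons_succ]
      exact he (by rwa [Fin.succ_lt_succ_iff] at hij)

lemma midChains_zero_sum (m m' : ℕ) (f : (Fin 0 → Fin m') → ℚ) :
    ∑ e ∈ midChains m m' 0, f e = f (fun i => i.elim0) := by
  have : midChains m m' 0 = {fun i => i.elim0} := by
    ext e
    simp only [midChains, Finset.mem_filter, Finset.mem_univ, true_and, Finset.mem_singleton]
    constructor
    · intro _; funext i; exact i.elim0
    · intro _; exact ⟨fun i => i.elim0, fun i => i.elim0⟩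
  rw [this, Finset.sum_singleton]

lemma midChains_succ_sum (m m' d : ℕ) (l : Fin (d+1) → ℕ) :
    (∑ e ∈ midChains m m' (d+1), ∏ i, ((e i : ℕ) : ℚ) ^ (l i))
      = ∑ k ∈ Finset.Ico (m+1) m', (k:ℚ)^(l 0) *
          ∑ e ∈ midChains k m' d, ∏ i, ((e i : ℕ) : ℚ) ^ (l i.succ) := by
  simp only [Finset.mul_sum]
  rw [Finset.sum_sigma']
  symm
  refine Finset.sum_bij' (i := fun p hp => Fin.cons ⟨p.1, ?_⟩ p.2)
    (j := fun e he => ⟨(e 0 : ℕ), Fin.tail e⟩) ?_ ?_ ?_ ?_ ?_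
  · rw [Finset.mem_sigma] at hp
    exact (Finset.mem_Ico.mp hp.1).2
  · intro p hp
    rw [Finset.mem_sigma] at hp
    obtain ⟨hk, he⟩ := hp
    rw [Finset.mem_Ico] at hk
    simp only [midChains, Finset.mem_filter, Finset.mem_univ, true_and] at he ⊢
    obtain ⟨hsm, hgt⟩ := he
    have hlt : ∀ i, (⟨p.1, hk.2⟩ : Fin m') < p.2 i := by
      intro i
      rw [Fin.lt_iff_val_lt_val]
      exact hgt i
    refine ⟨strictMono_cons _ _ hsm hlt, fun i => ?_⟩
    induction i using Fin.cases with
    | zero => simpa using hk.1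
    | succ i' =>
      simp only [Fin.cons_succ]
      exact lt_trans hk.1 (hgt i')
  · intro e he
    simp only [midChains, Finset.mem_filter, Finset.mem_univ, true_and] at he
    obtain ⟨hsm, hgt⟩ := he
    rw [Finset.mem_sigma]
    constructor
    · rw [Finset.mem_Ico]
      exact ⟨hgt 0, (e 0).isLt⟩
    · simp only [midChains, Finset.mem_filter, Finset.mem_univ, true_and]
      constructor
      · intro i j hij
        exact hsm (Fin.succ_lt_succ_iff.mpr hij)
      · intro i
        exact Fin.lt_iff_val_lt_val.mp (hsm (Fin.succ_pos i))
  · intro p hp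
    ext
    · simp
    · simp [Fin.tail_cons]
  · intro e he
    simp [Fin.cons_self_tail]
  · intro p hp
    rw [Fin.prod_univ_succ]
    simp [Fin.cons_succ]

lemma exists_poly : ∀ (d : ℕ) (l : Fin d → ℕ),
    ∃ P : MvPolynomial (Fin 2) ℚ,
      P.totalDegree ≤ (∑ i, l i) + d ∧
      ∀ m m' : ℕ, m < m' →
        (∑ e ∈ midChains m m' d, ∏ i, ((e i : ℕ) : ℚ) ^ (l i)) =
          MvPolynomial.eval ![(m : ℚ), (m' : ℚ)] P := by
  intro d
  induction d with
  | zero =>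
    intro l
    refine ⟨1, by simp, fun m m' _ => ?_⟩
    rw [midChains_zero_sum]
    simp
  | succ d ih =>
    intro l
    obtain ⟨Pd, hdeg, heval⟩ := ih (fun i : Fin d => l i.succ)
    set B : MvPolynomial (Fin 2) ℚ := (MvPolynomial.X 0)^(l 0) * Pd with hB
    set G : MvPolynomial (Fin 2) ℚ := sumOp B with hG
    have hBdeg : B.totalDegree ≤ l 0 + ((∑ i : Fin d, l i.succ) + d) := by
      refine (totalDegree_mul _ _).trans ?_
      exact add_le_add ((totalDegree_pow _ _).trans (by simp [totalDegree_X])) hdeg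
    have hGdeg : G.totalDegree ≤ (∑ i, l i) + (d + 1) := by
      refine (sumOp_totalDegree _).trans ?_
      rw [Fin.sum_univ_succ]
      omega
    set f1 : Fin 2 → MvPolynomial (Fin 2) ℚ := ![MvPolynomial.X 1, MvPolynomial.X 1] with hf1
    set f2 : Fin 2 → MvPolynomial (Fin 2) ℚ := ![MvPolynomial.X 0 + 1, MvPolynomial.X 1] with hf2
    have hf1deg : ∀ i, (f1 i).totalDegree ≤ 1 := by
      intro i; fin_cases i <;> simp [hf1, totalDegree_X]
    have hf2deg : ∀ i, (f2 i).totalDegree ≤ 1 := by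
      intro i; fin_cases i
      · refine (totalDegree_add _ _).trans ?_
        simp [hf2, totalDegree_X]
      · simp [hf2, totalDegree_X]
    refine ⟨MvPolynomial.bind₁ f1 G - MvPolynomial.bind₁ f2 G, ?_, ?_⟩
    · refine (totalDegree_sub _ _).trans (max_le ?_ ?_)
      · exact (aeval_totalDegree_le f1 hf1deg G).trans hGdeg
      · exact (aeval_totalDegree_le f2 hf2deg G).trans hGdeg
    · intro m m' hmm'
      have hBeval : ∀ k : ℕ, k < m' →
          MvPolynomial.eval ![(k:ℚ), (m':ℚ)] B
            = (k:ℚ)^(l 0) * MvPolynomial.eval ![(k:ℚ), (m':ℚ)] Pd := by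
        intro k hk
        simp [hB]
      rw [midChains_succ_sum]
      have step1 : ∀ k ∈ Finset.Ico (m+1) m',
          (k:ℚ)^(l 0) * (∑ e ∈ midChains k m' d, ∏ i, ((e i : ℕ) : ℚ) ^ (l i.succ))
            = MvPolynomial.eval ![(k:ℚ), (m':ℚ)] B := by
        intro k hk
        rw [Finset.mem_Ico] at hk
        rw [heval k m' hk.2, hBeval k hk.2]
      rw [Finset.sum_congr rfl step1]
      have hsplit : ∑ k ∈ Finset.Ico (m+1) m', MvPolynomial.eval ![(k:ℚ), (m':ℚ)] B
          = (∑ k ∈ Finset.range m', MvPolynomial.eval ![(k:ℚ), (m':ℚ)] B)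
            - ∑ k ∈ Finset.range (m+1), MvPolynomial.eval ![(k:ℚ), (m':ℚ)] B := by
        rw [Finset.sum_Ico_eq_sub _ hmm']
      have e1 : ∀ (v : Fin 2 → ℚ) (φ : MvPolynomial (Fin 2) ℚ),
          MvPolynomial.aeval v φ = MvPolynomial.eval v φ := by
        intro v φ
        rw [← MvPolynomial.coe_aeval_eq_eval]
        rfl
      have hcomp : ∀ (f : Fin 2 → MvPolynomial (Fin 2) ℚ) (v : Fin 2 → ℚ)
          (φ : MvPolynomial (Fin 2) ℚ),
          MvPolynomial.eval v (MvPolynomial.bind₁ f φ)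
            = MvPolynomial.eval (fun i => MvPolynomial.eval v (f i)) φ := by
        intro f v φ
        rw [← e1, MvPolynomial.aeval_bind₁]
        have hfe : (fun i => MvPolynomial.aeval v (f i))
            = fun i => MvPolynomial.eval v (f i) := funext fun i => e1 v (f i)
        rw [hfe, e1]
      rw [hsplit, ← sumOp_eval, ← sumOp_eval, ← hG]
      rw [map_sub, hcomp, hcomp]
      have hv1 : (fun i => MvPolynomial.eval ![(m:ℚ), (m':ℚ)] (f1 i))
          = ![(m':ℚ), (m':ℚ)] := by
        funext i; fin_cases i <;> simp [hf1]
      have hv2 : (fun i => MvPolynomial.eval ![(m:ℚ), (m':ℚ)] (f2 i))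
          = ![((m:ℚ)+1), (m':ℚ)] := by
        funext i; fin_cases i <;> simp [hf2]
      rw [hv1, hv2]
      norm_num

lemma eval_poly_eq (Q : MvPolynomial (Fin 2) ℚ) (g : Fin 2 → Polynomial ℚ) (y : ℚ) :
    Polynomial.eval y (MvPolynomial.eval₂ Polynomial.C g Q)
      = MvPolynomial.eval (fun i => Polynomial.eval y (g i)) Q := by
  have h := MvPolynomial.eval₂_comp_left (Polynomial.evalRingHom y) Polynomial.C g Q
  simp only [Polynomial.coe_evalRingHom] at h
  rw [h]
  have h1 : (Polynomial.evalRingHom y).comp Polynomial.C = RingHom.id ℚ := by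
    ext x; simp
  rw [h1]
  rfl

lemma vanish_eq_zero (Q : MvPolynomial (Fin 2) ℚ)
    (h : ∀ m m' : ℕ, m < m' → MvPolynomial.eval ![(m:ℚ), (m':ℚ)] Q = 0) : Q = 0 := by
  have natset_inf : ∀ c : ℕ, Set.Infinite {x : ℚ | ∃ n : ℕ, c < n ∧ x = (n:ℕ)} := by
    intro c
    apply Set.infinite_of_injective_forall_mem (f := fun n : ℕ => ((c + 1 + n : ℕ) : ℚ))
    · intro a b hab
      simp only [Nat.cast_inj] at hab
      omega
    · intro n
      exact ⟨c + 1 + n, by omega, rfl⟩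
  -- step 1: for every natural m and every rational y, eval ![m, y] Q = 0
  have step1 : ∀ (m : ℕ) (y : ℚ), MvPolynomial.eval ![(m:ℚ), y] Q = 0 := by
    intro m y
    set qm : Polynomial ℚ :=
      MvPolynomial.eval₂ Polynomial.C ![Polynomial.C (m:ℚ), Polynomial.X] Q with hqm
    have hev : ∀ z : ℚ, Polynomial.eval z qm = MvPolynomial.eval ![(m:ℚ), z] Q := by
      intro z
      rw [hqm, eval_poly_eq]
      have hfe : (fun i => Polynomial.eval z (![Polynomial.C (m:ℚ), Polynomial.X] i))
          = ![(m:ℚ), z] := by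
        funext i; fin_cases i <;> simp
      rw [hfe]
    have hzero : qm = 0 := by
      refine Polynomial.eq_zero_of_infinite_isRoot qm ((natset_inf m).mono ?_)
      rintro x ⟨n, hn, rfl⟩
      simp only [Set.mem_setOf_eq, Polynomial.IsRoot]
      rw [hev]
      exact h m n hn
    have := hev y
    rw [hzero] at this
    simpa using this.symm
  -- step 2
  have step2 : ∀ (x y : ℚ), MvPolynomial.eval ![x, y] Q = 0 := by
    intro x y
    set py : Polynomial ℚ :=
      MvPolynomial.eval₂ Polynomial.C ![Polynomial.X, Polynomial.C y] Q with hpy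
    have hev : ∀ z : ℚ, Polynomial.eval z py = MvPolynomial.eval ![z, y] Q := by
      intro z
      rw [hpy, eval_poly_eq]
      have hfe : (fun i => Polynomial.eval z (![Polynomial.X, Polynomial.C y] i))
          = ![z, y] := by
        funext i; fin_cases i <;> simp
      rw [hfe]
    have hzero : py = 0 := by
      refine Polynomial.eq_zero_of_infinite_isRoot py ((natset_inf 0).mono ?_)
      rintro z ⟨n, hn, rfl⟩
      simp only [Set.mem_setOf_eq, Polynomial.IsRoot]
      rw [hev]
      exact step1 n y
    have := hev x
    rw [hzero] at this
    simpa using this.symm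
  apply MvPolynomial.funext
  intro v
  have hv : v = ![v 0, v 1] := by
    funext i; fin_cases i <;> simp
  rw [hv, step2]
  simp

end Aux

/-- the two-boundary iterated power sums
`Σ_{m < m₁ < ⋯ < m_d < m'} m₁^{l₁} ⋯ m_d^{l_d}` are given by a unique polynomial
in the two variables `m, m'`, of total degree at most `l₁ + ⋯ + l_d + d`. -/
theorem two_boundary_power_sum_polynomial (d : ℕ) (hd : 1 ≤ d) (l : Fin d → ℕ) :
    ∃! P : MvPolynomial (Fin 2) ℚ,
      P.totalDegree ≤ (∑ i, l i) + d ∧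
      ∀ m m' : ℕ, m < m' →
        (∑ e ∈ midChains m m' d, ∏ i, ((e i : ℕ) : ℚ) ^ (l i)) =
          MvPolynomial.eval ![(m : ℚ), (m' : ℚ)] P := by
  obtain ⟨P, hdeg, heval⟩ := exists_poly d l
  refine ⟨P, ⟨hdeg, heval⟩, ?_⟩
  rintro P' ⟨hdeg', heval'⟩
  have h0 : P' - P = 0 := by
    apply vanish_eq_zero
    intro m m' hmm'
    rw [map_sub, ← heval m m' hmm', ← heval' m m' hmm', sub_self]
  exact sub_eq_zero.mp h0
end

section
/- Let p be a prime and let n ≥ 1, α ≥ 1, m ≥ 1 be integers. Then, in ℚ_p, the family indexed by l ∈ ℕ whose term is (−1)^l · C(n+l−1, l) · p^{αl} · (Σ_{r=1}^{p^α−1} r^{−(n+l)}) · (Σ_{u=0}^{m−1} u^{l}) is summable, and Σ_{k=1}^{p^α m − 1} k^{−n} = p^{−αn} · Σ_{u=1}^{m−1} u^{−n} + Σ_{l=0}^{∞} (−1)^l · C(n+l−1, l) · p^{αl} · (Σ_{r=1}^{p^α−1} r^{−(n+l)}) · (Σ_{u=0}^{m−1} u^{l}), where all rational numbers are viewed in ℚ_p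 and the convention 0^0 = 1 is used. -/
/-- the depth-one harmonic Frobenius decomposition in ℚ_p:
`Σ_{k=1}^{p^α m - 1} k^{-n} = p^{-αn} Σ_{u=1}^{m-1} u^{-n}
  + Σ_{l≥0} (-1)^l C(n+l-1,l) p^{αl} (Σ_{r=1}^{p^α-1} r^{-(n+l)}) (Σ_{u=0}^{m-1} u^l)`,
the series over `l` being summable in ℚ_p. -/
theorem depth_one_harmonic_frobenius (p : ℕ) [Fact p.Prime] (n α m : ℕ)
    (hn : 1 ≤ n) (hα : 1 ≤ α) (hm : 1 ≤ m) :
    Summable (fun l : ℕ =>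
      (-1 : ℚ_[p]) ^ l * ((n + l - 1).choose l : ℚ_[p]) * (p : ℚ_[p]) ^ (α * l) *
        (∑ r ∈ Finset.Ico 1 (p ^ α), ((r : ℚ_[p]) ^ (n + l))⁻¹) *
        (∑ u ∈ Finset.range m, (u : ℚ_[p]) ^ l)) ∧
    (∑ k ∈ Finset.Ico 1 (p ^ α * m), ((k : ℚ_[p]) ^ n)⁻¹)
      = ((p : ℚ_[p]) ^ (α * n))⁻¹ * (∑ u ∈ Finset.Ico 1 m, ((u : ℚ_[p]) ^ n)⁻¹) +
        ∑' l : ℕ,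
          (-1 : ℚ_[p]) ^ l * ((n + l - 1).choose l : ℚ_[p]) * (p : ℚ_[p]) ^ (α * l) *
            (∑ r ∈ Finset.Ico 1 (p ^ α), ((r : ℚ_[p]) ^ (n + l))⁻¹) *
            (∑ u ∈ Finset.range m, (u : ℚ_[p]) ^ l) := by
  have hp : p.Prime := Fact.out
  set P : ℕ := p ^ α with hPdef
  have hP1 : 1 < P := Nat.one_lt_pow (by omega) hp.one_lt
  -- step 1: for each u, r with 1 ≤ r < P, the binomial series
  have key : ∀ u : ℕ, ∀ r ∈ Finset.Ico 1 P, HasSum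
      (fun l : ℕ => (-1 : ℚ_[p]) ^ l * ((n + l - 1).choose l : ℚ_[p]) * (p : ℚ_[p]) ^ (α * l) *
        ((r : ℚ_[p]) ^ (n + l))⁻¹ * (u : ℚ_[p]) ^ l)
      ((((P * u + r : ℕ) : ℚ_[p]) ^ n)⁻¹) := by
    intro u r hr
    rw [Finset.mem_Ico] at hr
    have hrne : (r : ℚ_[p]) ≠ 0 := Nat.cast_ne_zero.mpr (by omega)
    set t : ℚ_[p] := -((p : ℚ_[p]) ^ α * u / r) with ht
    have hrnorm : (p : ℝ) ^ (-(α : ℤ)) < ‖(r : ℚ_[p])‖ := by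
      by_contra h
      push_neg at h
      rw [show ((r : ℚ_[p]) = ((r : ℤ) : ℚ_[p])) by push_cast; ring,
        Padic.norm_int_le_pow_iff_dvd] at h
      have hle : (p : ℤ) ^ α ≤ (r : ℤ) := Int.le_of_dvd (by exact_mod_cast hr.1) h
      have : P ≤ r := by exact_mod_cast hle
      omega
    have hppos : (0 : ℝ) < (p : ℝ) ^ (-(α : ℤ)) := by
      apply zpow_pos; exact_mod_cast hp.pos
    have htlt : ‖t‖ < 1 := by
      have h1 : ‖t‖ = (p : ℝ) ^ (-(α : ℤ)) * ‖(u : ℚ_[p])‖ / ‖(r : ℚ_[p])‖ := by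
        rw [ht, norm_neg, norm_div, norm_mul, Padic.norm_p_pow]
      have h2 : ‖(u : ℚ_[p])‖ ≤ 1 := by
        have := Padic.norm_int_le_one (p := p) (u : ℤ)
        simpa using this
      rw [h1]
      rw [div_lt_one (lt_trans hppos hrnorm)]
      calc (p : ℝ) ^ (-(α : ℤ)) * ‖(u : ℚ_[p])‖ ≤ (p : ℝ) ^ (-(α : ℤ)) * 1 := by
            exact mul_le_mul_of_nonneg_left h2 (le_of_lt hppos)
        _ = (p : ℝ) ^ (-(α : ℤ)) := mul_one _
        _ < ‖(r : ℚ_[p])‖ := hrnorm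
    have H := (hasSum_choose_mul_geometric_of_norm_lt_one (n - 1) htlt).mul_left
      (((r : ℚ_[p]) ^ n)⁻¹)
    have hne2 : (1 : ℚ_[p]) - t ≠ 0 := by
      intro h0
      have : ‖(1 : ℚ_[p])‖ = ‖t‖ := by
        rw [show t = 1 by linear_combination -h0]
      rw [norm_one] at this
      rw [← this] at htlt
      exact lt_irrefl _ htlt
    have hsumcast : ((P * u + r : ℕ) : ℚ_[p]) = (p : ℚ_[p]) ^ α * u + r := by
      push_cast [hPdef]; ring
    have hsne : ((P * u + r : ℕ) : ℚ_[p]) ≠ 0 := Nat.cast_ne_zero.mpr (by omega)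
    have hsne' : (p : ℚ_[p]) ^ α * u + r ≠ 0 := hsumcast ▸ hsne
    convert H using 1
    · rfl
    · funext l
      have hc : ((n + l - 1).choose l : ℚ_[p]) = ((l + (n - 1)).choose (n - 1) : ℚ_[p]) := by
        congr 1
        rw [show n + l - 1 = l + (n - 1) by omega,
          ← Nat.choose_symm (Nat.le_add_right l (n - 1)), Nat.add_sub_cancel_left]
      rw [hc, ht]
      have hppow : (p : ℚ_[p]) ^ (α * l) = ((p : ℚ_[p]) ^ α) ^ l := by rw [← pow_mul]
      rw [hppow, pow_add]
      field_simp
      linear_combination (-(-1 : ℚ_[p]) ^ l * ((l + (n - 1)).choose (n - 1) : ℚ_[p]) * ((p : ℚ_[p]) ^ α) ^ l * (u : ℚ_[p]) ^ l) * mul_inv_cancel₀ (pow_ne_zero l hrne)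
    · rw [hsumcast, show n - 1 + 1 = n by omega, ht]
      have h1t : (1 : ℚ_[p]) - -((p : ℚ_[p]) ^ α * u / r) = ((p : ℚ_[p]) ^ α * u + r) / r := by
        field_simp; ring
      rw [h1t, div_pow, one_div, inv_div, eq_comm, inv_mul_eq_div, div_right_comm,
        div_self (pow_ne_zero _ hrne), one_div]
  -- step 2: sum the HasSum over the finite set
  set s : Finset (ℕ × ℕ) := Finset.range m ×ˢ Finset.Ico 1 P with hs
  have HS : HasSum
      (fun l : ℕ => ∑ x ∈ s, ((-1 : ℚ_[p]) ^ l * ((n + l - 1).choose l : ℚ_[p]) *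
        (p : ℚ_[p]) ^ (α * l) * ((x.2 : ℚ_[p]) ^ (n + l))⁻¹ * (x.1 : ℚ_[p]) ^ l))
      (∑ x ∈ s, (((P * x.1 + x.2 : ℕ) : ℚ_[p]) ^ n)⁻¹) := by
    apply hasSum_sum
    rintro ⟨u, r⟩ hx
    rw [hs, Finset.mem_product] at hx
    exact key u r hx.2
  have hfun : ∀ l : ℕ, (∑ x ∈ s, ((-1 : ℚ_[p]) ^ l * ((n + l - 1).choose l : ℚ_[p]) *
        (p : ℚ_[p]) ^ (α * l) * ((x.2 : ℚ_[p]) ^ (n + l))⁻¹ * (x.1 : ℚ_[p]) ^ l))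
      = (-1 : ℚ_[p]) ^ l * ((n + l - 1).choose l : ℚ_[p]) * (p : ℚ_[p]) ^ (α * l) *
        (∑ r ∈ Finset.Ico 1 P, ((r : ℚ_[p]) ^ (n + l))⁻¹) *
        (∑ u ∈ Finset.range m, (u : ℚ_[p]) ^ l) := by
    intro l
    rw [hs, Finset.sum_product]
    simp only [Finset.sum_mul, Finset.mul_sum]
  rw [funext hfun] at HS
  refine ⟨HS.summable, ?_⟩
  rw [HS.tsum_eq]
  -- step 3: reindex the big sum
  have hIR : ∀ (N k : ℕ), 1 ≤ k →
      (∑ j ∈ Finset.Ico 1 N, ((j : ℚ_[p]) ^ k)⁻¹) = ∑ j ∈ Finset.range N, ((j : ℚ_[p]) ^ k)⁻¹ := by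
    intro N k hk
    rcases Nat.eq_zero_or_pos N with h | h
    · simp [h]
    rw [Finset.range_eq_Ico, Finset.sum_eq_sum_Ico_succ_bot h]
    simp [zero_pow (by omega : k ≠ 0)]
  rw [hIR _ _ hn]
  have hsplit : (∑ k ∈ Finset.range (P * m), ((k : ℚ_[p]) ^ n)⁻¹)
      = ∑ u ∈ Finset.range m, ∑ r ∈ Finset.range P, (((P * u + r : ℕ) : ℚ_[p]) ^ n)⁻¹ := by
    rw [← Finset.sum_product']
    apply Finset.sum_nbij' (i := fun k => (k / P, k % P)) (j := fun x => P * x.1 + x.2)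
    · intro a ha
      rw [Finset.mem_range] at ha
      rw [Finset.mem_product, Finset.mem_range, Finset.mem_range]
      constructor
      · exact Nat.div_lt_of_lt_mul (by omega)
      · exact Nat.mod_lt _ (by omega)
    · rintro ⟨u, r⟩ hx
      rw [Finset.mem_product, Finset.mem_range, Finset.mem_range] at hx
      rw [Finset.mem_range]
      calc P * u + r < P * u + P := by omega
        _ = P * (u + 1) := by ring
        _ ≤ P * m := Nat.mul_le_mul_left _ (by omega)
    · intro a _
      exact Nat.div_add_mod a P
    · rintro ⟨u, r⟩ hx
      rw [Finset.mem_product, Finset.mem_range, Finset.mem_range] at hx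
      have h1 : (P * u + r) / P = u := by
        rw [Nat.mul_add_div (by omega), Nat.div_eq_of_lt hx.2]
        omega
      have h2 : (P * u + r) % P = r := by
        rw [Nat.mul_add_mod, Nat.mod_eq_of_lt hx.2]
      simp [h1, h2]
    · intro a ha
      rw [Nat.div_add_mod a P]
  rw [hsplit]
  have hinner : ∀ u ∈ Finset.range m,
      (∑ r ∈ Finset.range P, (((P * u + r : ℕ) : ℚ_[p]) ^ n)⁻¹)
      = (((P * u : ℕ) : ℚ_[p]) ^ n)⁻¹
        + ∑ r ∈ Finset.Ico 1 P, (((P * u + r : ℕ) : ℚ_[p]) ^ n)⁻¹ := by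
    intro u _
    rw [Finset.range_eq_Ico, Finset.sum_eq_sum_Ico_succ_bot (by omega : 0 < P)]
    norm_num
  rw [Finset.sum_congr rfl hinner, Finset.sum_add_distrib]
  have hfirst : (∑ u ∈ Finset.range m, (((P * u : ℕ) : ℚ_[p]) ^ n)⁻¹)
      = ((p : ℚ_[p]) ^ (α * n))⁻¹ * ∑ u ∈ Finset.Ico 1 m, ((u : ℚ_[p]) ^ n)⁻¹ := by
    rw [hIR m n hn, Finset.mul_sum]
    refine Finset.sum_congr rfl fun u _ => ?_
    have : ((P * u : ℕ) : ℚ_[p]) = (p : ℚ_[p]) ^ α * u := by push_cast [hPdef]; ring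
    rw [this, mul_pow, ← pow_mul, mul_inv]
  rw [hfirst]
  congr 1
  rw [hs, Finset.sum_product]
end

section
/- Let d ≥ 1 be an integer, let c_1, …, c_d ∈ ℂ satisfy |c_i| = 1 for all i, and let s_1, …, s_d ∈ ℂ be such that for every r ∈ {1, …, d}: Re(s_{d−r+1} + s_{d−r+2} + ⋯ + s_d) > r. Then the family indexed by tuples of integers (m_1, …, m_d) with 0 < m_1 < ⋯ < m_d, whose term is (∏_{i=1}^d c_i^{m_i}) · ∏_{i=1}^d m_i^{−s_i}, is summable (absolutely convergent) in ℂ, where for a positive integer m and s ∈ ℂ, m^{−s} = exp(−s · log m). -/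
lemma MZF_abel_aux (l δ : ℕ → ℝ) (n : ℕ) (hl : Monotone l)
    (hD : ∀ j, 0 ≤ ∑ i ∈ Finset.Ico j n, δ i) :
    ∀ k j, n ≤ j + k → (∑ i ∈ Finset.Ico j n, δ i) * l j ≤ ∑ i ∈ Finset.Ico j n, δ i * l i := by
  intro k
  induction k with
  | zero =>
    intro j hj
    rw [Finset.Ico_eq_empty (by omega)]
    simp
  | succ k ih =>
    intro j hj
    by_cases hjn : n ≤ j
    · rw [Finset.Ico_eq_empty (by omega)]; simp
    · have hjn' : j < n := by omega
      rw [Finset.sum_eq_sum_Ico_succ_bot hjn', Finset.sum_eq_sum_Ico_succ_bot hjn' (fun i => δ i * l i)]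
      have h1 := ih (j + 1) (by omega)
      have h2 : (∑ i ∈ Finset.Ico (j+1) n, δ i) * l j ≤ (∑ i ∈ Finset.Ico (j+1) n, δ i) * l (j+1) :=
        mul_le_mul_of_nonneg_left (hl (Nat.le_succ j)) (hD (j+1))
      nlinarith [h1, h2]

lemma MZF_filter_sum (d j : ℕ) (g : Fin d → ℝ) (σ : ℕ → ℝ)
    (hσ : ∀ i (h : i < d), σ i = g ⟨i, h⟩) :
    ∑ i ∈ Finset.Ico j d, σ i
      = ∑ i ∈ Finset.univ.filter (fun i : Fin d => j ≤ (i : ℕ)), g i := by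
  apply Finset.sum_bij (fun i hi => (⟨i, (Finset.mem_Ico.1 hi).2⟩ : Fin d))
  · intro i hi
    simp only [Finset.mem_filter, Finset.mem_univ, true_and]
    exact (Finset.mem_Ico.1 hi).1
  · intro a ha b hb h
    exact congrArg Fin.val h
  · intro b hb
    simp only [Finset.mem_filter, Finset.mem_univ, true_and] at hb
    exact ⟨b, Finset.mem_Ico.2 ⟨hb, b.2⟩, Fin.ext rfl⟩
  · intro i hi
    exact hσ i (Finset.mem_Ico.1 hi).2

lemma MZF_dom_summable (d : ℕ) (p : ℝ) (hp : p < -1) :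
    Summable (fun m : {f : Fin d → ℕ // StrictMono f ∧ ∀ i, 0 < f i} =>
      ∏ i, ((m.1 i : ℕ) : ℝ) ^ p) := by
  classical
  have hg : Summable (fun n : ℕ => (n : ℝ) ^ p) := Real.summable_nat_rpow.2 hp
  have hgnn : ∀ n : ℕ, 0 ≤ (n : ℝ) ^ p := fun n => Real.rpow_nonneg (Nat.cast_nonneg n) p
  apply summable_of_sum_le (c := (∑' n : ℕ, (n : ℝ) ^ p) ^ d)
  · intro m
    exact Finset.prod_nonneg fun i _ => hgnn _
  · intro u
    set t : Fin d → Finset ℕ := fun i => u.image (fun m => m.1 i) with ht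
    have h1 : ∑ m ∈ u, ∏ i, ((m.1 i : ℕ) : ℝ) ^ p
        = ∑ f ∈ u.image Subtype.val, ∏ i, ((f i : ℕ) : ℝ) ^ p := by
      rw [Finset.sum_image (fun a _ b _ h => Subtype.ext h)]
    have h2 : u.image Subtype.val ⊆ Fintype.piFinset t := by
      intro f hf
      rw [Finset.mem_image] at hf
      obtain ⟨m, hm, rfl⟩ := hf
      rw [Fintype.mem_piFinset]
      intro i
      exact Finset.mem_image_of_mem _ hm
    calc ∑ m ∈ u, ∏ i, ((m.1 i : ℕ) : ℝ) ^ p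
        = ∑ f ∈ u.image Subtype.val, ∏ i, ((f i : ℕ) : ℝ) ^ p := h1
      _ ≤ ∑ f ∈ Fintype.piFinset t, ∏ i, ((f i : ℕ) : ℝ) ^ p :=
          Finset.sum_le_sum_of_subset_of_nonneg h2
            (fun f _ _ => Finset.prod_nonneg fun i _ => hgnn _)
      _ = ∏ i : Fin d, ∑ n ∈ t i, (n : ℝ) ^ p := (Finset.prod_univ_sum t fun _ n => (n : ℝ) ^ p).symm
      _ ≤ ∏ i : Fin d, ∑' n : ℕ, (n : ℝ) ^ p := by
          apply Finset.prod_le_prod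
          · exact fun i _ => Finset.sum_nonneg fun n _ => hgnn n
          · exact fun i _ => Summable.sum_le_tsum (t i) (fun n _ => hgnn n) hg
      _ = (∑' n : ℕ, (n : ℝ) ^ p) ^ d := by
          rw [Finset.prod_const, Finset.card_univ, Fintype.card_fin]


/-- absolute convergence of the multiple zeta function series at
roots of unity on the domain `U_d = {s | Re(s_{d-r+1} + ⋯ + s_d) > r, r = 1,…,d}`.
Here `m^{-s}` is the complex power `cpow`, i.e. `exp(-s log m)` for `m > 0`. -/
theorem MZF_summable_on_Ud (d : ℕ) (hd : 1 ≤ d) (c : Fin d → ℂ)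
    (hc : ∀ i, ‖c i‖ = 1) (s : Fin d → ℂ)
    (hs : ∀ r : ℕ, 1 ≤ r → r ≤ d →
      (r : ℝ) < (∑ i ∈ Finset.univ.filter (fun i : Fin d => d - r ≤ (i : ℕ)), s i).re) :
    Summable (fun m : {f : Fin d → ℕ // StrictMono f ∧ ∀ i, 0 < f i} =>
      (∏ i, c i ^ (m.1 i)) * ∏ i, ((m.1 i : ℕ) : ℂ) ^ (-(s i))) := by
  classical
  set σ : ℕ → ℝ := fun i => if h : i < d then (s ⟨i, h⟩).re else 0 with hσdef
  have hσ : ∀ i (h : i < d), σ i = (s ⟨i, h⟩).re := fun i h => dif_pos h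
  -- tail sums
  have htail : ∀ j, j < d → ((d - j : ℕ) : ℝ) < ∑ i ∈ Finset.Ico j d, σ i := by
    intro j hj
    have h := hs (d - j) (by omega) (by omega)
    have hdd : d - (d - j) = j := by omega
    rw [hdd, Complex.re_sum] at h
    rwa [MZF_filter_sum d j (fun i => (s i).re) σ hσ]
  -- choose ε
  obtain ⟨ε, hε0, hεle⟩ : ∃ ε : ℝ, 0 < ε ∧
      ∀ j, j < d → ((d - j : ℕ) : ℝ) * (1 + ε) ≤ ∑ i ∈ Finset.Ico j d, σ i := by
    have hne : (Finset.range d).Nonempty := ⟨0, Finset.mem_range.2 (by omega)⟩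
    refine ⟨(Finset.range d).inf' hne
      (fun j => ((∑ i ∈ Finset.Ico j d, σ i) - ((d - j : ℕ) : ℝ)) / ((d - j : ℕ) : ℝ)), ?_, ?_⟩
    · rw [Finset.lt_inf'_iff]
      intro j hj
      rw [Finset.mem_range] at hj
      have hk : (0:ℝ) < ((d - j : ℕ) : ℝ) := by
        have : 1 ≤ d - j := by omega
        exact_mod_cast Nat.lt_of_lt_of_le Nat.zero_lt_one this
      exact div_pos (by linarith [htail j hj]) hk
    · intro j hj
      have hk : (0:ℝ) < ((d - j : ℕ) : ℝ) := by
        have : 1 ≤ d - j := by omega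
        exact_mod_cast Nat.lt_of_lt_of_le Nat.zero_lt_one this
      have hle := Finset.inf'_le
        (fun j => ((∑ i ∈ Finset.Ico j d, σ i) - ((d - j : ℕ) : ℝ)) / ((d - j : ℕ) : ℝ))
        (Finset.mem_range.2 hj)
      rw [le_div_iff₀ hk] at hle
      nlinarith [hle]
  have hp : -(1 + ε) < -1 := by linarith
  have hdom := MZF_dom_summable d (-(1 + ε)) hp
  -- key pointwise inequality
  have key : ∀ m : {f : Fin d → ℕ // StrictMono f ∧ ∀ i, 0 < f i},
      ∑ i : Fin d, Real.log ((m.1 i : ℕ) : ℝ) * (1 + ε)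
        ≤ ∑ i : Fin d, Real.log ((m.1 i : ℕ) : ℝ) * (s i).re := by
    intro m
    have hmono := m.2.1
    have hpos := m.2.2
    set l : ℕ → ℝ := fun i => Real.log ((m.1 ⟨min i (d - 1), by omega⟩ : ℕ) : ℝ) with hldef
    have hlmono : Monotone l := by
      intro a b hab
      apply Real.log_le_log
      · exact_mod_cast hpos _
      · have : (⟨min a (d - 1), by omega⟩ : Fin d) ≤ ⟨min b (d - 1), by omega⟩ := by
          rw [Fin.le_def]; simp; omega
        exact_mod_cast hmono.monotone this
    have hD : ∀ j, 0 ≤ ∑ i ∈ Finset.Ico j d, (σ i - (1 + ε)) := by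
      intro j
      by_cases hj : j < d
      · rw [Finset.sum_sub_distrib, Finset.sum_const, Nat.card_Ico, nsmul_eq_mul]
        have := hεle j hj
        linarith
      · rw [Finset.Ico_eq_empty (by omega)]; simp
    have h0 := MZF_abel_aux l (fun i => σ i - (1 + ε)) d hlmono hD d 0 (by omega)
    have hl0 : 0 ≤ l 0 := Real.log_nonneg (by exact_mod_cast hpos _)
    have hmain : 0 ≤ ∑ i ∈ Finset.Ico 0 d, (σ i - (1 + ε)) * l i :=
      le_trans (mul_nonneg (hD 0) hl0) h0
    rw [← Finset.range_eq_Ico] at hmain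
    rw [← Fin.sum_univ_eq_sum_range (fun i => (σ i - (1 + ε)) * l i) d] at hmain
    have heq : ∀ i : Fin d, (σ (i : ℕ) - (1 + ε)) * l (i : ℕ)
        = ((s i).re - (1 + ε)) * Real.log ((m.1 i : ℕ) : ℝ) := by
      intro i
      have h1 : σ (i : ℕ) = (s i).re := by rw [hσ _ i.2]
      have h2 : l (i : ℕ) = Real.log ((m.1 i : ℕ) : ℝ) := by
        have hfin : (⟨min (i : ℕ) (d - 1), by omega⟩ : Fin d) = i :=
          Fin.ext (by have hi := i.2; simp only [Fin.val_mk]; omega)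
        simp only [hldef]
        exact congrArg (fun x => Real.log ((m.1 x : ℕ) : ℝ)) hfin
      rw [h1, h2]
    rw [Finset.sum_congr rfl (fun i _ => heq i)] at hmain
    have : ∑ i : Fin d, ((s i).re - (1 + ε)) * Real.log ((m.1 i : ℕ) : ℝ)
        = ∑ i : Fin d, Real.log ((m.1 i : ℕ) : ℝ) * (s i).re
          - ∑ i : Fin d, Real.log ((m.1 i : ℕ) : ℝ) * (1 + ε) := by
      rw [← Finset.sum_sub_distrib]
      exact Finset.sum_congr rfl fun i _ => by ring
    linarith [this ▸ hmain]
  -- final comparison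
  apply Summable.of_norm
  apply hdom.of_nonneg_of_le (fun m => norm_nonneg _)
  intro m
  have hpos := m.2.2
  have hval : ∀ i, (0:ℝ) < ((m.1 i : ℕ) : ℝ) := fun i => by exact_mod_cast hpos i
  have habs : ‖(∏ i, c i ^ (m.1 i)) * ∏ i, ((m.1 i : ℕ) : ℂ) ^ (-(s i))‖
      = ∏ i, ((m.1 i : ℕ) : ℝ) ^ (-(s i).re) := by
    rw [norm_mul, norm_prod, norm_prod]
    have h1 : ∀ i ∈ Finset.univ, ‖c i ^ m.1 i‖ = 1 := fun i _ => by
      rw [norm_pow, hc, one_pow]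
    rw [Finset.prod_congr rfl h1, Finset.prod_const_one, one_mul]
    apply Finset.prod_congr rfl
    intro i _
    have hcast : ((m.1 i : ℕ) : ℂ) = (((m.1 i : ℕ) : ℝ) : ℂ) := by push_cast; ring
    rw [hcast, Complex.norm_cpow_eq_rpow_re_of_pos (hval i)]
    simp
  rw [habs]
  have e1 : ∏ i, ((m.1 i : ℕ) : ℝ) ^ (-(s i).re)
      = Real.exp (∑ i, Real.log ((m.1 i : ℕ) : ℝ) * (-(s i).re)) := by
    rw [Real.exp_sum]
    exact Finset.prod_congr rfl fun i _ => Real.rpow_def_of_pos (hval i) _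
  have e2 : ∏ i, ((m.1 i : ℕ) : ℝ) ^ (-(1 + ε))
      = Real.exp (∑ i, Real.log ((m.1 i : ℕ) : ℝ) * (-(1 + ε))) := by
    rw [Real.exp_sum]
    exact Finset.prod_congr rfl fun i _ => Real.rpow_def_of_pos (hval i) _
  rw [e1, e2, Real.exp_le_exp]
  have := key m
  simp only [mul_neg]
  rw [Finset.sum_neg_distrib, Finset.sum_neg_distrib]
  exact neg_le_neg this
end

section
/- Let K be a field of characteristic zero, let d ≥ 1 be an integer, let t_1, …, t_d ∈ ℤ be integers of arbitrary sign, and let a_1, …, a_d ∈ K be nonzero. Then there exist an integer J ≥ 0 and, for each j ∈ {1, …, J}, a polynomial P_j ∈ K[X], a nonzero element c_j ∈ K, an integer d_j with 0 ≤ d_j ≤ d, positive integers n_{j,1}, …, n_{j,d_j}, and nonzero elements b_{j,1}, …, b_{j,d_j} ∈ K, such that for every integer m ≥ 1: Σ_{0 < m_1 < ⋯ < m_d < m} (∏_{i=1}^d a_i^{m_i}) · ∏_{i=1}^d m_i^{−t_i} = Σ_{j=1}^{J} P_j(m) · c_j^{m} · (Σ_{0 < k_1 < ⋯ < k_{d_j}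 < m} (∏_{i=1}^{d_j} b_{j,i}^{k_i}) · ∏_{i=1}^{d_j} k_i^{−n_{j,i}}). Here m^{−t} for t < 0 means m^{|t|}, and natural numbers are viewed in K via the canonical embedding. -/
set_option linter.unusedSectionVars false
set_option linter.unreachableTactic false
set_option linter.unusedTactic false
namespace LocAux
open Polynomial

lemma mem_chainsBelow {m k : ℕ} {e : Fin k → Fin m} :
    e ∈ chainsBelow m k ↔ StrictMono e ∧ ∀ i, 0 < (e i : ℕ) := by
  simp [chainsBelow]

lemma chainsBelow_zero (m : ℕ) : chainsBelow m 0 = {finZeroElim} := by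
  ext e
  rw [mem_chainsBelow, Finset.mem_singleton]
  constructor
  · intro _; funext i; exact i.elim0
  · intro h
    exact ⟨fun a b hab => a.elim0, fun i => i.elim0⟩

/-- Splitting off the top coordinate of a chain. -/
lemma sum_chainsBelow_succ {M : Type*} [AddCommMonoid M] (d m : ℕ)
    (F : (Fin (d+1) → ℕ) → M) :
    ∑ e ∈ chainsBelow m (d+1), F (fun i => (e i : ℕ))
      = ∑ k ∈ Finset.Ioo 0 m, ∑ e ∈ chainsBelow k d,
          F (Fin.snoc (fun i => (e i : ℕ)) k) := by
  rw [← Finset.sum_fiberwise_of_maps_to (g := fun e : Fin (d+1) → Fin m => (e (Fin.last d) : ℕ))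
      (t := Finset.Ioo 0 m) (fun e he => ?_)]
  · refine Finset.sum_congr rfl (fun k hk => ?_)
    have hk' := Finset.mem_Ioo.mp hk
    refine Finset.sum_bij' (fun e he => fun i : Fin d =>
        (⟨(e i.castSucc : ℕ), ?_⟩ : Fin k))
      (fun e he => Fin.snoc (fun i : Fin d => (⟨(e i : ℕ), lt_trans (e i).2 hk'.2⟩ : Fin m))
        ⟨k, hk'.2⟩) ?_ ?_ ?_ ?_ ?_
    · -- e i.castSucc < k
      have hmem := (Finset.mem_filter.mp he).1
      have := (mem_chainsBelow.mp (Finset.mem_filter.mp he).1).1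
        (Fin.castSucc_lt_last i)
      have hlast : (e (Fin.last d) : ℕ) = k := (Finset.mem_filter.mp he).2
      omega
    · intro e he
      have h1 := mem_chainsBelow.mp (Finset.mem_filter.mp he).1
      exact mem_chainsBelow.mpr ⟨fun i j hij => by
        simpa using h1.1 (Fin.castSucc_lt_castSucc_iff.mpr hij), fun i => h1.2 i.castSucc⟩
    · intro e he
      have h1 := mem_chainsBelow.mp he
      refine Finset.mem_filter.mpr ⟨mem_chainsBelow.mpr ⟨?_, ?_⟩, ?_⟩
      · intro i j hij
        rcases Fin.eq_castSucc_or_eq_last j with ⟨j', rfl⟩ | rfl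
        · rcases Fin.eq_castSucc_or_eq_last i with ⟨i', rfl⟩ | rfl
          · simp only [Fin.snoc_castSucc]
            exact Fin.mk_lt_mk.mpr (h1.1 (by exact_mod_cast Fin.castSucc_lt_castSucc_iff.mp hij))
          · exact absurd hij (not_lt.mpr (le_of_lt (Fin.castSucc_lt_last j')))
        · rcases Fin.eq_castSucc_or_eq_last i with ⟨i', rfl⟩ | rfl
          · simp only [Fin.snoc_castSucc, Fin.snoc_last]
            exact Fin.mk_lt_mk.mpr (e i').2
          · exact absurd hij (lt_irrefl _)
      · intro i
        rcases Fin.eq_castSucc_or_eq_last i with ⟨i', rfl⟩ | rfl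
        · simpa using h1.2 i'
        · simpa using hk'.1
      · simp
    · intro e he
      funext i
      rcases Fin.eq_castSucc_or_eq_last i with ⟨i', rfl⟩ | rfl
      · simp [Fin.snoc_castSucc]
      · have hlast : (e (Fin.last d) : ℕ) = k := (Finset.mem_filter.mp he).2
        simp only [Fin.snoc_last]
        exact Fin.ext hlast.symm
    · intro e he
      funext i
      simp [Fin.snoc_castSucc]
    · intro e he
      have hlast : (e (Fin.last d) : ℕ) = k := (Finset.mem_filter.mp he).2
      congr 1
      funext i
      rcases Fin.eq_castSucc_or_eq_last i with ⟨i', rfl⟩ | rfl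
      · simp [Fin.snoc_castSucc]
      · simp [Fin.snoc_last, hlast]
  · have h1 := mem_chainsBelow.mp he
    exact Finset.mem_Ioo.mpr ⟨h1.2 _, (e (Fin.last d)).2⟩

variable {K : Type*} [Field K] [CharZero K]

/-- localized multiple harmonic sum -/
noncomputable def mhsum (d : ℕ) (t : Fin d → ℤ) (a : Fin d → K) (m : ℕ) : K :=
  ∑ e ∈ chainsBelow m d, (∏ i, a i ^ ((e i : ℕ))) * ∏ i, (((e i : ℕ) : K)) ^ (-(t i))

lemma mhsum_zero (t : Fin 0 → ℤ) (a : Fin 0 → K) (m : ℕ) : mhsum 0 t a m = 1 := by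
  rw [mhsum, chainsBelow_zero]
  simp

lemma mhsum_succ (d : ℕ) (t : Fin (d+1) → ℤ) (a : Fin (d+1) → K) (m : ℕ) :
    mhsum (d+1) t a m
      = ∑ k ∈ Finset.Ioo 0 m, a (Fin.last d) ^ k * ((k : K)) ^ (-(t (Fin.last d)))
          * mhsum d (t ∘ Fin.castSucc) (a ∘ Fin.castSucc) k := by
  rw [mhsum]
  rw [show (∑ e ∈ chainsBelow m (d+1),
      (∏ i, a i ^ ((e i : ℕ))) * ∏ i, (((e i : ℕ) : K)) ^ (-(t i)))
    = ∑ e ∈ chainsBelow m (d+1),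
      (fun v : Fin (d+1) → ℕ => (∏ i, a i ^ v i) * ∏ i, ((v i : K)) ^ (-(t i)))
        (fun i => (e i : ℕ)) from rfl]
  rw [sum_chainsBelow_succ d m (fun v : Fin (d+1) → ℕ => (∏ i, a i ^ v i) * ∏ i, ((v i : K)) ^ (-(t i)))]
  refine Finset.sum_congr rfl (fun k hk => ?_)
  rw [mhsum, Finset.mul_sum]
  refine Finset.sum_congr rfl (fun e he => ?_)
  simp only [Fin.prod_univ_castSucc, Fin.snoc_castSucc, Fin.snoc_last, Function.comp]
  ring

lemma exists_antideriv (u : K) (hu : u ≠ 0) :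
    ∀ N : ℕ, ∀ R : Polynomial K, R.natDegree ≤ N →
      ∃ Q : Polynomial K, ∀ x : K, u * Q.eval (x+1) - Q.eval x = R.eval x := by
  intro N
  induction N with
  | zero =>
    intro R hR
    rw [Polynomial.eq_C_of_natDegree_le_zero hR]
    by_cases hu1 : u = 1
    · subst hu1
      exact ⟨Polynomial.C (R.coeff 0) * Polynomial.X, fun x => by simp; ring⟩
    · refine ⟨Polynomial.C (R.coeff 0 / (u - 1)), fun x => ?_⟩
      have h1 : u - 1 ≠ 0 := sub_ne_zero.mpr hu1
      simp only [Polynomial.eval_C]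
      field_simp
  | succ N ih =>
    intro R hR
    by_cases hle : R.natDegree ≤ N
    · exact ih R hle
    have hdeg : R.natDegree = N + 1 := by omega
    set a := R.coeff (N+1) with ha
    by_cases hu1 : u = 1
    · -- u = 1
      subst hu1
      set Q₀ : Polynomial K := Polynomial.C (a / (N+2)) * Polynomial.X^(N+2) with hQ₀
      set L₀ : Polynomial K := Q₀.comp (Polynomial.X + 1) - Q₀ with hL₀
      have hLeval : ∀ x : K, L₀.eval x = Q₀.eval (x+1) - Q₀.eval x := by
        intro x; simp [hL₀, Polynomial.eval_comp]
      have hN2 : ((N:K) + 2) ≠ 0 := by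
        have : ((N+2 : ℕ) : K) ≠ 0 := Nat.cast_ne_zero.mpr (by omega)
        push_cast at this; convert this using 2 <;> ring_nf
      have hLco : ∀ k, L₀.coeff k = (a / (N+2)) * (((N+2).choose k : K) - if k = N+2 then 1 else 0) := by
        intro k
        simp [hL₀, hQ₀, Polynomial.coeff_sub, Polynomial.coeff_C_mul, mul_comp,
          C_comp, X_comp, Polynomial.coeff_X_pow, pow_comp,
          Polynomial.coeff_X_add_one_pow, mul_sub]
      have hrest : (R - L₀).natDegree ≤ N := by
        rw [Polynomial.natDegree_le_iff_coeff_eq_zero]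
        intro k hk
        rw [Polynomial.coeff_sub, hLco k]
        rcases eq_or_lt_of_le (Nat.succ_le_of_lt hk) with hk1 | hk1
        · rw [← hk1]
          rw [if_neg (by omega), ← ha, Nat.choose_succ_self_right]
          field_simp
          push_cast
          ring
        · rw [R.coeff_eq_zero_of_natDegree_lt (by omega)]
          rcases eq_or_lt_of_le (Nat.succ_le_of_lt hk1) with hk2 | hk2
          · rw [← hk2, if_pos rfl, Nat.choose_self]
            simp
          · rw [if_neg (by omega), Nat.choose_eq_zero_of_lt (by omega)]
            simp
      obtain ⟨Q₁, hQ₁⟩ := ih (R - L₀) hrest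
      refine ⟨Q₀ + Q₁, fun x => ?_⟩
      have h2 := hQ₁ x
      rw [Polynomial.eval_sub, hLeval x] at h2
      simp only [Polynomial.eval_add, one_mul] at *
      linear_combination h2
    · -- u ≠ 1
      have h1 : u - 1 ≠ 0 := sub_ne_zero.mpr hu1
      set Q₀ : Polynomial K := Polynomial.C (a / (u-1)) * Polynomial.X^(N+1) with hQ₀
      set L₀ : Polynomial K := u • Q₀.comp (Polynomial.X + 1) - Q₀ with hL₀
      have hLeval : ∀ x : K, L₀.eval x = u * Q₀.eval (x+1) - Q₀.eval x := by
        intro x; simp [hL₀, Polynomial.eval_comp]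
      have hLco : ∀ k, L₀.coeff k
          = u * ((a / (u-1)) * ((N+1).choose k : K)) - (a / (u-1)) * (if k = N+1 then 1 else 0) := by
        intro k
        simp [hL₀, hQ₀, Polynomial.coeff_sub, Polynomial.coeff_smul, Polynomial.coeff_C_mul,
          mul_comp, C_comp, X_comp, Polynomial.coeff_X_pow, pow_comp,
          Polynomial.coeff_X_add_one_pow, smul_eq_mul]
      have hrest : (R - L₀).natDegree ≤ N := by
        rw [Polynomial.natDegree_le_iff_coeff_eq_zero]
        intro k hk
        rw [Polynomial.coeff_sub, hLco k]
        rcases eq_or_lt_of_le (Nat.succ_le_of_lt hk) with hk1 | hk1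
        · rw [← hk1, if_pos rfl, Nat.choose_self, ← ha]
          field_simp
          ring
        · rw [R.coeff_eq_zero_of_natDegree_lt (by omega), if_neg (by omega),
            Nat.choose_eq_zero_of_lt (by omega)]
          simp
      obtain ⟨Q₁, hQ₁⟩ := ih (R - L₀) hrest
      refine ⟨Q₀ + Q₁, fun x => ?_⟩
      have h2 := hQ₁ x
      rw [Polynomial.eval_sub, hLeval x] at h2
      simp only [Polynomial.eval_add] at *
      linear_combination h2

lemma abel_sum (G H : ℕ → K) (m : ℕ) (hm : 1 ≤ m) :
    ∑ k ∈ Finset.Ioo 0 m, (G (k+1) - G k) * H k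
      = G m * H m - G 1 * H 1 - ∑ k ∈ Finset.Ioo 0 m, G (k+1) * (H (k+1) - H k) := by
  have tel : ∑ k ∈ Finset.Ioo 0 m, (G (k+1) * H (k+1) - G k * H k)
      = G m * H m - G 1 * H 1 := by
    rw [← Finset.Ico_add_one_left_eq_Ioo, Finset.sum_Ico_eq_sum_range]
    have h := Finset.sum_range_sub (fun i => G (i+1) * H (i+1)) (m-1)
    have hm1 : m - 1 + 1 = m := by omega
    rw [hm1] at h
    rw [← h]
    refine Finset.sum_congr rfl (fun k hk => ?_)
    have : 0 + 1 + k = k + 1 := by omega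
    rw [this]
  have key : ∀ k : ℕ, (G (k+1) - G k) * H k
      = (G (k+1) * H (k+1) - G k * H k) - G (k+1) * (H (k+1) - H k) := by
    intro k; ring
  simp_rw [key]
  rw [Finset.sum_sub_distrib, tel]

lemma mhsum_succ_diff (d : ℕ) (t : Fin (d+1) → ℤ) (a : Fin (d+1) → K) (k : ℕ) (hk : 1 ≤ k) :
    mhsum (d+1) t a (k+1) - mhsum (d+1) t a k
      = a (Fin.last d) ^ k * ((k : K)) ^ (-(t (Fin.last d)))
          * mhsum d (t ∘ Fin.castSucc) (a ∘ Fin.castSucc) k := by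
  rw [mhsum_succ, mhsum_succ, ← Finset.Ico_add_one_left_eq_Ioo, ← Finset.Ico_add_one_left_eq_Ioo,
    Finset.sum_Ico_succ_top (by omega)]
  rw [Finset.Ico_add_one_left_eq_Ioo]
  exact add_sub_cancel_left _ _

end LocAux

namespace LocAux

/-- restriction to positive integers -/
def res {K : Type*} (f : ℕ → K) : ℕ+ → K := fun m => f m

/-- generator set -/
def gens (K : Type*) [Field K] [CharZero K] (D : ℕ) : Set (ℕ+ → K) :=
  { g | ∃ (P : Polynomial K) (c : K) (d' : ℕ) (n : Fin d' → ℕ) (b : Fin d' → K),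
      d' ≤ D ∧ c ≠ 0 ∧ (∀ i, 1 ≤ n i) ∧ (∀ i, b i ≠ 0) ∧
      g = res (fun m => P.eval (m : K) * c ^ m * mhsum d' (fun i => ((n i : ℤ))) b m) }

variable {K : Type*} [Field K] [CharZero K]

lemma gens_mono {D D' : ℕ} (h : D ≤ D') : gens K D ⊆ gens K D' := by
  rintro g ⟨P, c, d', n, b, h1, h2, h3, h4, h5⟩
  exact ⟨P, c, d', n, b, le_trans h1 h, h2, h3, h4, h5⟩

lemma const_mem_gens (κ : K) (D : ℕ) : res (fun _ => κ) ∈ gens K D := by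
  refine ⟨Polynomial.C κ, 1, 0, finZeroElim, finZeroElim, Nat.zero_le _, one_ne_zero,
    fun i => i.elim0, fun i => i.elim0, ?_⟩
  funext m
  simp [res, mhsum_zero]

lemma keyA (D : ℕ)
    (IH : ∀ e, e ≤ D → ∀ (t : Fin e → ℤ) (a : Fin e → K), (∀ i, a i ≠ 0) →
      res (mhsum e t a) ∈ Submodule.span K (gens K e))
    (d' : ℕ) (hd' : d' ≤ D) (τ : ℤ) (u : K) (hu : u ≠ 0)
    (n : Fin d' → ℕ) (hn : ∀ i, 1 ≤ n i) (b : Fin d' → K) (hb : ∀ i, b i ≠ 0) :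
    res (fun m => ∑ k ∈ Finset.Ioo 0 m,
        u ^ k * ((k:K)) ^ (-τ) * mhsum d' (fun i => ((n i : ℤ))) b k)
      ∈ Submodule.span K (gens K (d'+1)) := by
  by_cases hτ : 1 ≤ τ
  · apply Submodule.subset_span
    refine ⟨1, 1, d'+1, Fin.snoc n τ.toNat, Fin.snoc b u, le_refl _, one_ne_zero, ?_, ?_, ?_⟩
    · intro i
      rcases Fin.eq_castSucc_or_eq_last i with ⟨i', rfl⟩ | rfl
      · simpa using hn i'
      · simp only [Fin.snoc_last]; omega
    · intro i
      rcases Fin.eq_castSucc_or_eq_last i with ⟨i', rfl⟩ | rfl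
      · simpa using hb i'
      · simpa using hu
    · funext m
      show _ = Polynomial.eval _ 1 * 1 ^ (m:ℕ) * _
      rw [Polynomial.eval_one, one_pow, one_mul, one_mul, res, mhsum_succ]
      have h1 : ((fun i => (((Fin.snoc n τ.toNat : Fin (d'+1) → ℕ) i : ℕ) : ℤ)) ∘ Fin.castSucc)
          = fun i : Fin d' => ((n i : ℤ)) := by
        funext i; simp [Function.comp, Fin.snoc_castSucc]
      have h2 : ((Fin.snoc b u : Fin (d'+1) → K) ∘ Fin.castSucc) = b := by
        funext i; simp [Function.comp, Fin.snoc_castSucc]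
      have h3 : (((Fin.snoc n τ.toNat : Fin (d'+1) → ℕ) (Fin.last d') : ℕ) : ℤ) = τ := by
        simp only [Fin.snoc_last]; omega
      have h4 : (Fin.snoc b u : Fin (d'+1) → K) (Fin.last d') = u := Fin.snoc_last _ _
      rw [h1, h2, h3, h4]
  · push_neg at hτ
    have hτ0 : τ ≤ 0 := by omega
    set s : ℕ := (-τ).toNat with hs
    have hτs : -τ = (s : ℤ) := by omega
    obtain ⟨Q, hQ⟩ := exists_antideriv u hu s (Polynomial.X ^ s)
      (le_of_eq (Polynomial.natDegree_X_pow s))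
    simp only [Polynomial.eval_pow, Polynomial.eval_X] at hQ
    have hGd : ∀ k : ℕ,
        Q.eval (((k+1 : ℕ)) : K) * u ^ (k+1) - Q.eval ((k:ℕ) : K) * u ^ k
          = u ^ k * ((k:K)) ^ s := by
      intro k
      push_cast
      rw [pow_succ]
      linear_combination u ^ k * hQ ((k:ℕ) : K)
    have hzp : ∀ k : ℕ, 1 ≤ k → ((k:K)) ^ (-τ) = ((k:K)) ^ s := by
      intro k hk
      rw [hτs, zpow_natCast]
    have hmain : ∀ m : ℕ, 1 ≤ m →
        (∑ k ∈ Finset.Ioo 0 m, u ^ k * ((k:K)) ^ (-τ)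
            * mhsum d' (fun i => ((n i : ℤ))) b k)
          = (fun k : ℕ => Q.eval (k : K) * u ^ k) m * mhsum d' (fun i => ((n i : ℤ))) b m
            - (fun k : ℕ => Q.eval (k : K) * u ^ k) 1 * mhsum d' (fun i => ((n i : ℤ))) b 1
            - ∑ k ∈ Finset.Ioo 0 m, (fun k : ℕ => Q.eval (k : K) * u ^ k) (k+1)
                * (mhsum d' (fun i => ((n i : ℤ))) b (k+1)
                    - mhsum d' (fun i => ((n i : ℤ))) b k) := by
      intro m hm
      rw [← abel_sum (fun k : ℕ => Q.eval (k : K) * u ^ k)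
        (fun k => mhsum d' (fun i => ((n i : ℤ))) b k) m hm]
      refine Finset.sum_congr rfl fun k hk => ?_
      have hk1 : 1 ≤ k := (Finset.mem_Ioo.mp hk).1
      rw [hzp k hk1, ← hGd k]
    rcases d' with _ | e
    · -- d' = 0
      have hres : res (fun m => ∑ k ∈ Finset.Ioo 0 m,
            u ^ k * ((k:K)) ^ (-τ) * mhsum 0 (fun i => ((n i : ℤ))) b k)
          = res (fun m => Q.eval (m : K) * u ^ m * mhsum 0 (fun i => ((n i : ℤ))) b m)
            - res (fun _ => Q.eval ((1:ℕ) : K) * u ^ 1 * mhsum 0 (fun i => ((n i : ℤ))) b 1) := by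
        funext m
        simp only [res, Pi.sub_apply]
        rw [hmain (m:ℕ) m.2]
        simp [mhsum_zero]
      rw [hres]
      refine Submodule.sub_mem _ ?_ ?_
      · exact Submodule.subset_span ⟨Q, u, 0, n, b, Nat.zero_le _, hu, hn, hb, rfl⟩
      · exact Submodule.subset_span (const_mem_gens _ _)
    · -- d' = e + 1
      have he1 : e + 1 ≤ D := hd'
      set Q' : Polynomial K := Q.comp (Polynomial.X + 1) with hQ'def
      have hQ'e : ∀ k : ℕ, Q'.eval ((k:ℕ) : K) = Q.eval (((k+1:ℕ)) : K) := by
        intro k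
        push_cast
        simp [hQ'def, Polynomial.eval_comp]
      set T : ℕ → Fin (e+1) → ℤ :=
        fun r => Fin.snoc (fun i => ((n (Fin.castSucc i) : ℤ))) (((n (Fin.last e) : ℤ)) - r)
        with hT
      set A : Fin (e+1) → K := Fin.snoc (b ∘ Fin.castSucc) (u * b (Fin.last e)) with hA
      have hAne : ∀ i, A i ≠ 0 := by
        intro i
        rcases Fin.eq_castSucc_or_eq_last i with ⟨i', rfl⟩ | rfl
        · simpa [hA] using hb i'.castSucc
        · simpa [hA] using mul_ne_zero hu (hb _)
      have hrec : ∀ (r : ℕ) (m : ℕ), mhsum (e+1) (T r) A m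
          = ∑ k ∈ Finset.Ioo 0 m, (u * b (Fin.last e)) ^ k
              * ((k:K)) ^ (-(((n (Fin.last e) : ℤ)) - r))
              * mhsum e ((fun i => ((n i : ℤ))) ∘ Fin.castSucc) (b ∘ Fin.castSucc) k := by
        intro r m
        rw [mhsum_succ]
        have h1 : (T r) ∘ Fin.castSucc = (fun i => ((n i : ℤ))) ∘ Fin.castSucc := by
          funext i; simp [hT, Function.comp, Fin.snoc_castSucc]
        have h2 : A ∘ Fin.castSucc = b ∘ Fin.castSucc := by
          funext i; simp [hA, Function.comp, Fin.snoc_castSucc]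
        have h3 : T r (Fin.last e) = ((n (Fin.last e) : ℤ)) - r := by simp [hT]
        have h4 : A (Fin.last e) = u * b (Fin.last e) := by simp [hA]
        rw [h1, h2, h3, h4]
      have hdiff : ∀ k : ℕ, 1 ≤ k →
          mhsum (e+1) (fun i => ((n i : ℤ))) b (k+1)
            - mhsum (e+1) (fun i => ((n i : ℤ))) b k
          = b (Fin.last e) ^ k * ((k:K)) ^ (-((n (Fin.last e) : ℤ)))
              * mhsum e ((fun i => ((n i : ℤ))) ∘ Fin.castSucc) (b ∘ Fin.castSucc) k :=
        fun k hk => mhsum_succ_diff e _ b k hk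
      have hres : res (fun m => ∑ k ∈ Finset.Ioo 0 m,
            u ^ k * ((k:K)) ^ (-τ) * mhsum (e+1) (fun i => ((n i : ℤ))) b k)
          = res (fun m => Q.eval (m : K) * u ^ m * mhsum (e+1) (fun i => ((n i : ℤ))) b m)
            - res (fun _ => Q.eval ((1:ℕ) : K) * u ^ 1 * mhsum (e+1) (fun i => ((n i : ℤ))) b 1)
            - ∑ r ∈ Finset.range (Q'.natDegree + 1),
                (u * Q'.coeff r) • res (mhsum (e+1) (T r) A) := by
        funext m
        simp only [res, Pi.sub_apply, Finset.sum_apply, Pi.smul_apply, smul_eq_mul]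
        rw [hmain (m:ℕ) m.2]
        congr 1
        -- third sums equal
        have step1 : ∀ k ∈ Finset.Ioo 0 (m:ℕ),
            (fun k : ℕ => Q.eval (k : K) * u ^ k) (k+1)
              * (mhsum (e+1) (fun i => ((n i : ℤ))) b (k+1)
                  - mhsum (e+1) (fun i => ((n i : ℤ))) b k)
            = ∑ r ∈ Finset.range (Q'.natDegree + 1),
                (u * Q'.coeff r) * ((u * b (Fin.last e)) ^ k
                  * ((k:K)) ^ (-(((n (Fin.last e) : ℤ)) - r))
                  * mhsum e ((fun i => ((n i : ℤ))) ∘ Fin.castSucc) (b ∘ Fin.castSucc) k) := by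
          intro k hk
          have hk1 : 1 ≤ k := (Finset.mem_Ioo.mp hk).1
          have hkz : ((k:K)) ≠ 0 := Nat.cast_ne_zero.mpr (by omega)
          rw [hdiff k hk1]
          have hQeval : Q.eval (((k+1:ℕ)) : K)
              = ∑ r ∈ Finset.range (Q'.natDegree + 1), Q'.coeff r * ((k:K)) ^ r := by
            rw [← hQ'e k, Polynomial.eval_eq_sum_range]
          simp only [hQeval, Finset.sum_mul]
          refine Finset.sum_congr rfl fun r hr => ?_
          have hexp : ((k:K)) ^ (-(((n (Fin.last e) : ℤ)) - (r:ℤ)))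
              = ((k:K)) ^ r * ((k:K)) ^ (-((n (Fin.last e) : ℤ))) := by
            have h5 : -(((n (Fin.last e) : ℤ)) - (r:ℤ))
                = (r:ℤ) + (-((n (Fin.last e) : ℤ))) := by ring
            rw [h5, zpow_add₀ hkz, zpow_natCast]
          rw [hexp]
          ring
        rw [Finset.sum_congr rfl step1, Finset.sum_comm]
        refine Finset.sum_congr rfl fun r hr => ?_
        rw [hrec r (m:ℕ), Finset.mul_sum]
      rw [hres]
      refine Submodule.sub_mem _ (Submodule.sub_mem _ ?_ ?_) ?_
      · exact Submodule.subset_span ⟨Q, u, e+1, n, b, Nat.le_succ _, hu, hn, hb, rfl⟩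
      · exact Submodule.subset_span (const_mem_gens _ _)
      · refine Submodule.sum_mem _ fun r hr => Submodule.smul_mem _ _ ?_
        exact Submodule.span_mono (gens_mono (Nat.le_succ _)) (IH (e+1) he1 (T r) A hAne)

lemma main_mem : ∀ D : ℕ, ∀ (t : Fin D → ℤ) (a : Fin D → K), (∀ i, a i ≠ 0) →
    res (mhsum D t a) ∈ Submodule.span K (gens K D) := by
  intro D
  induction D using Nat.strong_induction_on with
  | _ D IH =>
    rcases D with _ | d
    · intro t a ha
      apply Submodule.subset_span
      refine ⟨1, 1, 0, finZeroElim, finZeroElim, le_refl _, one_ne_zero,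
        fun i => i.elim0, fun i => i.elim0, ?_⟩
      funext m
      simp [res, mhsum_zero]
    · intro t a ha
      have IH' : ∀ e, e ≤ d → ∀ (t' : Fin e → ℤ) (a' : Fin e → K), (∀ i, a' i ≠ 0) →
          res (mhsum e t' a') ∈ Submodule.span K (gens K e) :=
        fun e he => IH e (by omega)
      have h0 := IH' d (le_refl d) (t ∘ Fin.castSucc) (a ∘ Fin.castSucc) (fun i => ha _)
      rw [Submodule.mem_span_set'] at h0
      obtain ⟨J, r, g, hg⟩ := h0
      have hgdata : ∀ j : Fin J, ∃ (P : Polynomial K) (c : K) (d' : ℕ) (n : Fin d' → ℕ)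
          (b : Fin d' → K), d' ≤ d ∧ c ≠ 0 ∧ (∀ i, 1 ≤ n i) ∧ (∀ i, b i ≠ 0) ∧
          ((g j : ℕ+ → K)) = res (fun m => P.eval (m : K) * c ^ m
            * mhsum d' (fun i => ((n i : ℤ))) b m) := fun j => (g j).2
      choose P c d' n b h1 h2 h3 h4 h5 using hgdata
      have hval : ∀ k : ℕ, ∀ hk : 0 < k, mhsum d (t ∘ Fin.castSucc) (a ∘ Fin.castSucc) k
          = ∑ j, r j * ((P j).eval (k : K) * c j ^ k
              * mhsum (d' j) (fun i => ((n j i : ℤ))) (b j) k) := by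
        intro k hk
        have h6 := congrFun hg (⟨k, hk⟩ : ℕ+)
        erw [Finset.sum_apply] at h6
        exact h6.symm.trans (Finset.sum_congr rfl fun j _ => by rw [h5 j]; rfl)
      have hfin : res (mhsum (d+1) t a)
          = ∑ j, r j • ∑ rr ∈ Finset.range ((P j).natDegree + 1),
              ((P j).coeff rr) • res (fun m => ∑ k ∈ Finset.Ioo 0 m,
                (a (Fin.last d) * c j) ^ k * ((k:K)) ^ (-(t (Fin.last d) - rr))
                * mhsum (d' j) (fun i => ((n j i : ℤ))) (b j) k) := by
        funext m
        simp only [Finset.sum_apply, Pi.smul_apply, smul_eq_mul, res]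
        rw [mhsum_succ]
        have step : ∀ k ∈ Finset.Ioo 0 (m:ℕ),
            a (Fin.last d) ^ k * ((k:K)) ^ (-(t (Fin.last d)))
              * mhsum d (t ∘ Fin.castSucc) (a ∘ Fin.castSucc) k
            = ∑ j, ∑ rr ∈ Finset.range ((P j).natDegree + 1),
                r j * ((P j).coeff rr * ((a (Fin.last d) * c j) ^ k
                  * ((k:K)) ^ (-(t (Fin.last d) - rr))
                  * mhsum (d' j) (fun i => ((n j i : ℤ))) (b j) k)) := by
          intro k hk
          have hk1 : 0 < k := (Finset.mem_Ioo.mp hk).1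
          have hkz : ((k:K)) ≠ 0 := Nat.cast_ne_zero.mpr (by omega)
          rw [hval k hk1, Finset.mul_sum]
          refine Finset.sum_congr rfl fun j _ => ?_
          rw [Polynomial.eval_eq_sum_range]
          simp only [Finset.sum_mul, Finset.mul_sum]
          refine Finset.sum_congr rfl fun rr hrr => ?_
          have hexp : ((k:K)) ^ (-(t (Fin.last d) - (rr:ℤ)))
              = ((k:K)) ^ rr * ((k:K)) ^ (-(t (Fin.last d))) := by
            have h7 : -(t (Fin.last d) - (rr:ℤ)) = (rr:ℤ) + (-(t (Fin.last d))) := by ring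
            rw [h7, zpow_add₀ hkz, zpow_natCast]
          rw [hexp]
          ring
        rw [Finset.sum_congr rfl step, Finset.sum_comm]
        refine Finset.sum_congr rfl fun j _ => ?_
        rw [Finset.sum_comm]
        simp only [Finset.mul_sum]
      rw [hfin]
      refine Submodule.sum_mem _ fun j _ => Submodule.smul_mem _ _
        (Submodule.sum_mem _ fun rr _ => Submodule.smul_mem _ _ ?_)
      exact Submodule.span_mono (gens_mono (by have := h1 j; omega : d' j + 1 ≤ d+1))
        (keyA d IH' (d' j) (h1 j) (t (Fin.last d) - rr) (a (Fin.last d) * c j)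
          (mul_ne_zero (ha _) (h2 j)) (n j) (h3 j) (b j) (h4 j))

end LocAux

/-- the localization map `loc^Σ`: every localized multiple harmonic sum
(with integer exponents `t_i` of any sign and nonzero weights `a_i`) is a finite
linear combination of ordinary multiple harmonic sums (with positive exponents)
multiplied by polynomials of the upper bound `m` and `m`-th powers of units. -/
theorem localization_of_multiple_harmonic_sums (K : Type*) [Field K] [CharZero K]
    (d : ℕ) (hd : 1 ≤ d) (t : Fin d → ℤ) (a : Fin d → K) (ha : ∀ i, a i ≠ 0) :
    ∃ (J : ℕ) (P : Fin J → Polynomial K) (c : Fin J → K) (dep : Fin J → ℕ)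
      (n : (j : Fin J) → Fin (dep j) → ℕ) (b : (j : Fin J) → Fin (dep j) → K),
      (∀ j, c j ≠ 0) ∧ (∀ j, dep j ≤ d) ∧ (∀ j i, 1 ≤ n j i) ∧
      (∀ j i, b j i ≠ 0) ∧
      ∀ m : ℕ, 1 ≤ m →
        (∑ e ∈ chainsBelow m d,
            (∏ i, a i ^ ((e i : ℕ))) * ∏ i, (((e i : ℕ) : K)) ^ (-(t i)))
        = ∑ j, (P j).eval (m : K) * (c j) ^ m *
            ∑ e ∈ chainsBelow m (dep j),
              (∏ i, b j i ^ ((e i : ℕ))) * ∏ i, ((((e i : ℕ) : K)) ^ (n j i))⁻¹ := by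
  have h := LocAux.main_mem (K := K) d t a ha
  rw [Submodule.mem_span_set'] at h
  obtain ⟨J, r, g, hg⟩ := h
  have hgdata : ∀ j : Fin J, ∃ (P : Polynomial K) (c : K) (d' : ℕ) (n : Fin d' → ℕ)
      (b : Fin d' → K), d' ≤ d ∧ c ≠ 0 ∧ (∀ i, 1 ≤ n i) ∧ (∀ i, b i ≠ 0) ∧
      ((g j : ℕ+ → K)) = LocAux.res (fun m => P.eval (m : K) * c ^ m
        * LocAux.mhsum d' (fun i => ((n i : ℤ))) b m) := fun j => (g j).2
  choose P c dep n b h1 h2 h3 h4 h5 using hgdata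
  refine ⟨J, fun j => Polynomial.C (r j) * P j, c, dep, n, b, h2, h1, h3, h4, ?_⟩
  intro m hm
  have h6 := congrFun hg (⟨m, hm⟩ : ℕ+)
  erw [Finset.sum_apply] at h6
  refine h6.symm.trans (Finset.sum_congr rfl fun j _ => ?_)
  rw [h5 j]
  simp only [LocAux.res, LocAux.mhsum, Polynomial.eval_mul, Polynomial.eval_C,
    zpow_neg, zpow_natCast]
  show r j * (Polynomial.eval (↑m) (P j) * c j ^ m * ∑ e ∈ chainsBelow m (dep j),
      (∏ i, b j i ^ ((e i : ℕ))) * ∏ i, ((((e i : ℕ) : K)) ^ (n j i))⁻¹)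
    = r j * Polynomial.eval (↑m) (P j) * c j ^ m * ∑ e ∈ chainsBelow m (dep j),
      (∏ i, b j i ^ ((e i : ℕ))) * ∏ i, ((((e i : ℕ) : K)) ^ (n j i))⁻¹
  ring
end
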